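/- arXiv:1401.4338 — 5 statements merged into one kernel-verified Lean document; each statement's English description precedes it below -/
import Mathlib

section
/- Let R be a commutative ring and v ∈ Rˣ a unit. For all integers m, n ≥ 0 and 0 ≤ k ≤ m+n, the bar-invariant subspace identity holds: [m+n,k] = Σ_{r+s=k, 0≤r≤m, 0≤s≤n} v^{r(n−s)−s(m−r)} · [m,r] · [n,s]. -/
/-- The q-integer `(n)_q = 1 + q + ⋯ + q^{n-1}` in `ℤ[q]`. -/
noncomputable def qInt (n : ℕ) : Polynomial ℤ :=
  ∑ j ∈ Finset.range n, (Polynomial.X : Polynomial ℤ) ^ j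

/-- The q-factorial `(n)_q! = (1)_q (2)_q ⋯ (n)_q` in `ℤ[q]`. -/
noncomputable def qFact (n : ℕ) : Polynomial ℤ :=
  ∏ j ∈ Finset.range n, qInt (j + 1)

/-- The bar-invariant q-binomial `[n,k] = v^{-k(n-k)} · binom(n,k)_q |_{q = v²}`, where
`gb` is the family of Gaussian binomials in `ℤ[q]` and `v` is a unit of `R`. -/
noncomputable def barBinom {R : Type*} [CommRing R] (v : Rˣ) (gb : ℕ → ℤ → Polynomial ℤ)
    (n : ℕ) (k : ℤ) : R :=
  ((v ^ (-(k * ((n : ℤ) - k))) : Rˣ) : R) * Polynomial.aeval ((v : R) ^ 2) (gb n k)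

/-!
The Gaussian binomials are pinned down by the q-factorial identity, since `ℤ[q]` is a domain and
the q-factorials are nonzero (they evaluate to ordinary factorials at `q = 1`). So they agree with
the solution of the q-Pascal recursion `binom(m+1,k+1) = binom(m,k+1) + q^{m-k} binom(m,k)`, for
which induction on `m` gives the q-Vandermonde identity
`binom(m+n,k) = ∑_{r+s=k} q^{r(n-s)} binom(m,r) binom(n,s)`.
Substituting `q = v²` and normalising, the summand acquires the unit
`v^{2r(n-s) - k(m+n-k) + r(m-r) + s(n-s)} = v^{r(n-s) - s(m-r)}`.
-/

open Polynomial Finset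

noncomputable def qBinom : ℕ → ℕ → ℤ[X]
  | 0, 0 => 1
  | 0, _ + 1 => 0
  | _ + 1, 0 => 1
  | m + 1, k + 1 => qBinom m (k + 1) + X ^ (m - k) * qBinom m k

lemma qBinom_zero_right : ∀ m, qBinom m 0 = 1
  | 0 => rfl
  | _ + 1 => rfl

lemma qBinom_succ_succ (m k : ℕ) :
    qBinom (m + 1) (k + 1) = qBinom m (k + 1) + X ^ (m - k) * qBinom m k := rfl

lemma qBinom_eq_zero_of_lt : ∀ {m k : ℕ}, m < k → qBinom m k = 0
  | 0, _ + 1, _ => rfl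
  | m + 1, k + 1, h => by
    rw [qBinom_succ_succ, qBinom_eq_zero_of_lt (by omega : m < k + 1),
      qBinom_eq_zero_of_lt (by omega : m < k), mul_zero, add_zero]

lemma qInt_add (a b : ℕ) : qInt (a + b) = qInt a + X ^ a * qInt b := by
  simp only [qInt, sum_range_add, pow_add, mul_sum]

lemma qFact_succ (n : ℕ) : qFact (n + 1) = qFact n * qInt (n + 1) :=
  prod_range_succ _ _

lemma qFact_ne_zero (n : ℕ) : qFact n ≠ 0 := by
  intro h
  have h1 : eval 1 (qFact n) = 0 := by rw [h, eval_zero]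
  simp only [qFact, qInt, eval_prod, eval_finsetSum, eval_pow, eval_X, one_pow, sum_const,
    card_range, nsmul_eq_mul, mul_one, prod_eq_zero_iff, mem_range] at h1
  obtain ⟨j, -, hj⟩ := h1
  omega

lemma qFact_mul_qFact_mul_qBinom : ∀ {m k : ℕ}, k ≤ m →
    qFact k * qFact (m - k) * qBinom m k = qFact m
  | m, 0, _ => by simp [qBinom_zero_right, qFact]
  | m + 1, k + 1, hk => by
    have hsplit : qInt (m + 1) = qInt (m - k) + X ^ (m - k) * qInt (k + 1) := by
      rw [← qInt_add]; congr 1; omega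
    have hleft : qFact (k + 1) * qFact (m - k) * qBinom m (k + 1) = qInt (m - k) * qFact m := by
      rcases Nat.lt_or_ge m (k + 1) with h | h
      · rw [qBinom_eq_zero_of_lt h, show m - k = 0 by omega]
        simp [qInt]
      · obtain ⟨j, hj⟩ : ∃ j, m - k = j + 1 := ⟨m - (k + 1), by omega⟩
        rw [← qFact_mul_qFact_mul_qBinom h, hj, qFact_succ j, show m - (k + 1) = j by omega]
        ring
    have hright : qFact (k + 1) * qFact (m - k) * (X ^ (m - k) * qBinom m k) =
        X ^ (m - k) * qInt (k + 1) * qFact m := by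
      rw [← qFact_mul_qFact_mul_qBinom (by omega : k ≤ m), qFact_succ]
      ring
    rw [Nat.add_sub_add_right, qBinom_succ_succ, mul_add, hleft, hright, qFact_succ m, hsplit]
    ring

lemma eq_qBinom_of_qFact_mul {m k : ℕ} {p : ℤ[X]} (hk : k ≤ m)
    (hp : qFact k * qFact (m - k) * p = qFact m) : p = qBinom m k :=
  mul_left_cancel₀ (mul_ne_zero (qFact_ne_zero _) (qFact_ne_zero _))
    (hp.trans (qFact_mul_qFact_mul_qBinom hk).symm)

-- outside `r ≤ m, s ≤ n` a factor vanishes, so the truncated subtractions do no harm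
lemma X_pow_mul_qBinom_mul_qBinom {m n r s : ℕ} :
    X ^ (m + n - (r + s)) * (X ^ (r * (n - s)) * qBinom m r * qBinom n s) =
      X ^ ((r + 1) * (n - s)) * (X ^ (m - r) * qBinom m r) * qBinom n s := by
  rcases lt_or_ge m r with hr | hr
  · simp [qBinom_eq_zero_of_lt hr]
  rcases lt_or_ge n s with hs | hs
  · simp [qBinom_eq_zero_of_lt hs]
  rw [show m + n - (r + s) = (m - r) + (n - s) by omega]
  ring

theorem qBinom_add (m n k : ℕ) :
    qBinom (m + n) k =
      ∑ p ∈ antidiagonal k, X ^ (p.1 * (n - p.2)) * qBinom m p.1 * qBinom n p.2 := by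
  induction m generalizing k with
  | zero =>
    rw [Nat.sum_antidiagonal_eq_sum_range_succ_mk, sum_range_succ', zero_add]
    simp [qBinom_zero_right, qBinom_eq_zero_of_lt]
  | succ m ih =>
    cases k with
    | zero => simp [qBinom_zero_right]
    | succ k =>
      rw [Nat.add_right_comm, qBinom_succ_succ, ih, ih, Nat.sum_antidiagonal_succ,
        Nat.sum_antidiagonal_succ, mul_sum, add_assoc, ← sum_add_distrib]
      simp only [qBinom_zero_right, qBinom_succ_succ]
      refine congrArg _ (sum_congr rfl fun p hp => ?_)
      rw [← mem_antidiagonal.mp hp, X_pow_mul_qBinom_mul_qBinom]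
      ring

theorem qBinom_add_eq_sum_filter (m n k : ℕ) :
    qBinom (m + n) k =
      ∑ p ∈ (antidiagonal k).filter (fun p => p.1 ≤ m ∧ p.2 ≤ n),
        X ^ (p.1 * (n - p.2)) * qBinom m p.1 * qBinom n p.2 := by
  rw [qBinom_add, sum_filter_of_ne]
  rintro ⟨r, s⟩ - hne
  by_contra! h
  rcases le_or_gt r m with hr | hr
  · exact hne (by simp [qBinom_eq_zero_of_lt (h hr)])
  · exact hne (by simp [qBinom_eq_zero_of_lt hr])

lemma aeval_sq_X_pow {R : Type*} [CommRing R] (v : Rˣ) (j : ℕ) :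
    aeval ((v : R) ^ 2) (X ^ j : ℤ[X]) = ((v ^ (2 * j : ℤ) : Rˣ) : R) := by
  rw [map_pow, aeval_X, ← pow_mul, ← Units.val_pow_eq_pow_val, ← zpow_natCast]
  push_cast
  rfl

theorem barBinom_vandermonde_general {R : Type*} [CommRing R] (v : Rˣ) (gb : ℕ → ℤ → Polynomial ℤ)
    (hdef : ∀ (m k : ℕ), k ≤ m → qFact k * qFact (m - k) * gb m (k : ℤ) = qFact m)
    (m n k : ℕ) (hk : k ≤ m + n) :
    barBinom v gb (m + n) (k : ℤ) =
      ∑ p ∈ (Finset.HasAntidiagonal.antidiagonal k).filter (fun p => p.1 ≤ m ∧ p.2 ≤ n),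
        ((v ^ ((p.1 : ℤ) * ((n : ℤ) - p.2) - (p.2 : ℤ) * ((m : ℤ) - p.1)) : Rˣ) : R) *
          barBinom v gb m (p.1 : ℤ) * barBinom v gb n (p.2 : ℤ) := by
  have hgb {a j : ℕ} (hj : j ≤ a) : gb a j = qBinom a j := eq_qBinom_of_qFact_mul hj (hdef a j hj)
  rw [barBinom, hgb hk, qBinom_add_eq_sum_filter, map_sum, mul_sum]
  refine sum_congr rfl fun ⟨r, s⟩ hp => ?_
  obtain ⟨hrs, hr, hs⟩ : r + s = k ∧ r ≤ m ∧ s ≤ n := by simpa using hp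
  have hunits : v ^ (-(k * ((m + n : ℕ) - k : ℤ))) * v ^ (2 * (r * (n - s) : ℕ) : ℤ) =
      v ^ ((r : ℤ) * (n - s) - s * (m - r)) * v ^ (-(r * ((m : ℤ) - r))) *
        v ^ (-(s * ((n : ℤ) - s))) := by
    simp only [← zpow_add]
    congr 1
    subst hrs
    push_cast [hs]
    ring
  simp only [barBinom, hgb hr, hgb hs, map_mul, aeval_sq_X_pow]
  have hval := congrArg Units.val hunits
  simp only [Units.val_mul] at hval
  linear_combination (aeval ((v : R) ^ 2) (qBinom m r) * aeval ((v : R) ^ 2) (qBinom n s)) * hval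

/-- The bar-invariant subspace identity
`[m+n,k] = ∑_{r+s=k, 0≤r≤m, 0≤s≤n} v^{r(n-s)-s(m-r)} [m,r][n,s]`. -/
theorem barBinom_vandermonde {R : Type*} [CommRing R] (v : Rˣ) (gb : ℕ → ℤ → Polynomial ℤ)
    (hzero : ∀ (m : ℕ) (j : ℤ), j < 0 ∨ (m : ℤ) < j → gb m j = 0)
    (hdef : ∀ (m k : ℕ), k ≤ m → qFact k * qFact (m - k) * gb m (k : ℤ) = qFact m)
    (m n k : ℕ) (hk : k ≤ m + n) :
    barBinom v gb (m + n) (k : ℤ) =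
      ∑ p ∈ (Finset.HasAntidiagonal.antidiagonal k).filter (fun p => p.1 ≤ m ∧ p.2 ≤ n),
        ((v ^ ((p.1 : ℤ) * ((n : ℤ) - p.2) - (p.2 : ℤ) * ((m : ℤ) - p.1)) : Rˣ) : R) *
          barBinom v gb m (p.1 : ℤ) * barBinom v gb n (p.2 : ℤ) :=
  barBinom_vandermonde_general v gb hdef m n k hk
end

section
/- For integers r, s, t ≥ 0, let Σ_{r,s,t} be the set of permutations σ of {1,…,r+s+t} such that σ⁻¹ is increasing on each of the blocks {1,…,r}, {r+1,…,r+s}, {r+s+1,…,r+s+t}. Then: (a) the map (σ,τ) ↦ σ̃∘τ is a bijection Σ_{r,s} × Σ_{r+s,t} → Σ_{r,s,t}, where σ̃ ∈ Σ_{r+s+t} extends σ ∈ Σ_{r,s} by the identity on the last t letters and ∘ denotes composition of orderings, (σ∘τ)(k) = σ(τ(k)); (b) the map (σ,ρ) ↦ σ̃'∘ρ is a bijection Σ_{s,t} × Σ_{r,s+t} → Σ_{r,s,t}, where σ̃' ∈ Σ_{r+s+t} is the identity on the first r letters and acts as σ shifted by r on the last s+t; and (c) for any word 𝐣 = (j_1,…,j_{r+s+t})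 over I, defining ζ̃(σ) for σ ∈ Σ_{r,s,t} as (1/2)·(sum of (α_{j_k},α_{j_ℓ}) over pairs k < ℓ lying in different blocks with σ⁻¹(ℓ) < σ⁻¹(k)) minus (1/2)·(sum over such pairs with σ⁻¹(k) < σ⁻¹(ℓ)), one has ζ̃(σ̃∘τ) = ζ(σ) + ζ(τ) for σ ∈ Σ_{r,s}, τ ∈ Σ_{r+s,t}, and ζ̃(σ̃'∘ρ) = ζ(σ) + ζ(ρ) for σ ∈ Σ_{s,t}, ρ ∈ Σ_{r,s+t} (the equalities of ζ's meaning equality of the corresponding half-integer exponents, i.e. after multiplying by 2, equality in ℤ). -/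
/-!
Both factorizations are instances of one statement about a fine block decomposition `p` that
becomes a coarser one `q` by merging the blocks lying in the range of an order embedding `f`.
A `p`-shuffle `π` determines its factors: `σ` must be the permutation sorting the positions
`π⁻¹ ∘ f` of the merged letters, and then `τ = σ̃⁻¹ π`. In the exponent of `σ̃ τ`, pairs of letters
in different `q`-blocks contribute `ζ(τ)` after relabelling by `σ̃`, which preserves the
`q`-blocks, and pairs inside the merged block, on which `τ⁻¹` is increasing, contribute `ζ(σ)`.
-/

/-- `σ` is a shuffle of the blocks `{0,…,r-1}` and `{r,…,n-1}` of `Fin n`: the positions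
`σ⁻¹` of the letters of each block are increasing.  (This is the set `Σ_{r,n-r}`.) -/
def isShuffle (n r : ℕ) (σ : Equiv.Perm (Fin n)) : Prop :=
  ∀ k l : Fin n, k < l → ((l : ℕ) < r ∨ r ≤ (k : ℕ)) → σ⁻¹ k < σ⁻¹ l

/-- `σ` is a shuffle of the three blocks `{0,…,r-1}`, `{r,…,r+s-1}`, `{r+s,…,n-1}` of
`Fin n`: the positions `σ⁻¹` of the letters of each block are increasing.
(This is the set `Σ_{r,s,n-r-s}`.) -/
def isShuffle3 (n r s : ℕ) (σ : Equiv.Perm (Fin n)) : Prop :=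
  ∀ k l : Fin n, k < l →
    ((l : ℕ) < r ∨ (r ≤ (k : ℕ) ∧ (l : ℕ) < r + s) ∨ r + s ≤ (k : ℕ)) → σ⁻¹ k < σ⁻¹ l

/-- Twice the exponent `ζ(σ)` for a two-block shuffle with boundary `r`. -/
def twoZeta {I : Type*} (n r : ℕ) (B : I → I → ℤ) (j : Fin n → I)
    (σ : Equiv.Perm (Fin n)) : ℤ :=
  ∑ k : Fin n, ∑ l : Fin n,
    if (k : ℕ) < r ∧ r ≤ (l : ℕ) then
      if σ⁻¹ l < σ⁻¹ k then B (j k) (j l) else -B (j k) (j l)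
    else 0

/-- Twice the exponent `ζ̃(σ)` for a three-block shuffle: the sum over pairs `(k,l)`,
`k < l`, lying in different blocks of `±(α_{j_k},α_{j_l})`, the sign recording whether
the pair is inverted by `σ`. -/
def twoZeta3 {I : Type*} (n r s : ℕ) (B : I → I → ℤ) (j : Fin n → I)
    (σ : Equiv.Perm (Fin n)) : ℤ :=
  ∑ k : Fin n, ∑ l : Fin n,
    if ((k : ℕ) < r ∧ r ≤ (l : ℕ)) ∨ ((k : ℕ) < r + s ∧ r + s ≤ (l : ℕ)) then
      if σ⁻¹ l < σ⁻¹ k then B (j k) (j l) else -B (j k) (j l)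
    else 0

/-- The embedding of `Fin m` into `Fin n` shifted by `r`, `k ↦ r + k`. -/
def addEmb (r m n : ℕ) (h : r + m ≤ n) : Fin m ↪ Fin n :=
  ⟨fun k => ⟨r + (k : ℕ), by have := k.isLt; omega⟩, by
    intro a b hab
    have : r + (a : ℕ) = r + (b : ℕ) := congrArg Fin.val hab
    exact Fin.ext (by omega)⟩

/-- The extension `σ̃` of `σ ∈ Σ_{r,s}` to a permutation of `{1,…,r+s+t}` fixing the last
`t` letters. -/
noncomputable def extFirst (r s t : ℕ) (σ : Equiv.Perm (Fin (r + s))) :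
    Equiv.Perm (Fin (r + s + t)) :=
  σ.viaFintypeEmbedding (Fin.castLEEmb (Nat.le_add_right (r + s) t))

/-- The extension `σ̃'` of `σ ∈ Σ_{s,t}` to a permutation of `{1,…,r+s+t}` fixing the
first `r` letters and acting as `σ` shifted by `r` on the last `s+t`. -/
noncomputable def extLast (r s t : ℕ) (σ : Equiv.Perm (Fin (s + t))) :
    Equiv.Perm (Fin (r + s + t)) :=
  σ.viaFintypeEmbedding (addEmb r (s + t) (r + s + t) (by omega))

open Equiv Function

section BlockShuffle

variable {n : ℕ} {β : Type*}

def IsBlockShuffle (b : Fin n → β) (σ : Perm (Fin n)) : Prop :=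
  ∀ k l, k < l → b k = b l → σ⁻¹ k < σ⁻¹ l

lemma IsBlockShuffle.inv_lt_inv_iff {b : Fin n → β} {σ : Perm (Fin n)}
    (hσ : IsBlockShuffle b σ) {k l : Fin n} (hkl : b k = b l) : σ⁻¹ k < σ⁻¹ l ↔ k < l := by
  refine ⟨fun hlt => lt_of_not_ge fun hle => ?_, fun hlt => hσ k l hlt hkl⟩
  rcases hle.eq_or_lt with rfl | hgt
  · exact hlt.false
  · exact (hσ l k hgt hkl.symm).not_gt hlt

variable [LinearOrder β]

def inversionTerm {I : Type*} (B : I → I → ℤ) (j : Fin n → I) (σ : Perm (Fin n))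
    (k l : Fin n) : ℤ :=
  if σ⁻¹ l < σ⁻¹ k then B (j k) (j l) else -B (j k) (j l)

def crossSum {I : Type*} (b : Fin n → β) (B : I → I → ℤ) (j : Fin n → I)
    (σ : Perm (Fin n)) : ℤ :=
  ∑ k, ∑ l, if b k < b l then inversionTerm B j σ k l else 0

lemma crossSum_mul_of_comp_eq {I : Type*} (b : Fin n → β) (B : I → I → ℤ) (j : Fin n → I)
    {e : Perm (Fin n)} (he : ∀ x, b (e x) = b x) (τ : Perm (Fin n)) :
    crossSum b B j (e * τ) = crossSum b B (j ∘ e) τ := by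
  unfold crossSum
  rw [← Equiv.sum_comp e]
  refine Finset.sum_congr rfl fun k _ => ?_
  rw [← Equiv.sum_comp e]
  simp only [he, inversionTerm, mul_inv_rev, Perm.mul_apply, Perm.coe_inv, symm_apply_apply,
    comp_apply]

lemma crossSum_eq_add_crossSum {γ I : Type*} [LinearOrder γ] {p : Fin n → β} {q : Fin n → γ}
    (hpq : ∀ x y, p x ≤ p y → q x ≤ q y) (B : I → I → ℤ) (j : Fin n → I) (σ : Perm (Fin n)) :
    crossSum p B j σ =
      (∑ k, ∑ l, if p k < p l ∧ q k = q l then inversionTerm B j σ k l else 0) +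
        crossSum q B j σ := by
  unfold crossSum
  rw [← Finset.sum_add_distrib]
  refine Finset.sum_congr rfl fun k _ => ?_
  rw [← Finset.sum_add_distrib]
  refine Finset.sum_congr rfl fun l _ => ?_
  by_cases hq : q k < q l
  · have hp : p k < p l := lt_of_not_ge fun hle => (hpq l k hle).not_gt hq
    simp [hp, hq, hq.ne]
  · by_cases hp : p k < p l
    · simp [hp, le_antisymm (hpq k l hp.le) (not_lt.1 hq)]
    · simp [hp, hq]

end BlockShuffle

section ViaFintypeEmbedding

variable {m n : ℕ} (f : Fin m ↪ Fin n) (σ : Perm (Fin m))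

lemma Equiv.Perm.viaFintypeEmbedding_inv_apply_image (a : Fin m) :
    (σ.viaFintypeEmbedding f)⁻¹ (f a) = f (σ⁻¹ a) := by
  rw [Perm.inv_eq_iff_eq, Perm.viaFintypeEmbedding_apply_image, Perm.coe_inv, apply_symm_apply]

lemma Equiv.Perm.viaFintypeEmbedding_inv_apply_notMem_range {x : Fin n}
    (hx : x ∉ Set.range f) : (σ.viaFintypeEmbedding f)⁻¹ x = x := by
  rw [Perm.inv_eq_iff_eq, Perm.viaFintypeEmbedding_apply_notMem_range _ _ hx]

end ViaFintypeEmbedding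

/-- `p` labels the fine blocks and `q` the coarse ones: `range f` is a single coarse block, whose
fine blocks are the `c`-blocks transported along `f`, and outside it the two decompositions agree. -/
structure IsBlockRefinement {m n : ℕ} {β γ δ : Type*} [LinearOrder β] [LinearOrder γ]
    [LinearOrder δ] (f : Fin m ↪ Fin n) (c : Fin m → γ) (p : Fin n → β) (q : Fin n → δ) :
    Prop where
  strictMono : StrictMono f
  comp_le_comp_iff : ∀ a b, p (f a) ≤ p (f b) ↔ c a ≤ c b
  coarse_le_of_fine_le : ∀ x y, p x ≤ p y → q x ≤ q y
  coarse_eq_iff_mem_range : ∀ a y, q y = q (f a) ↔ y ∈ Set.range f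
  fine_eq_of_notMem_range : ∀ x y, x ∉ Set.range f → q x = q y → p x = p y

namespace IsBlockRefinement

variable {m n : ℕ} {β γ δ : Type*} [LinearOrder β] [LinearOrder γ] [LinearOrder δ]
  {f : Fin m ↪ Fin n} {c : Fin m → γ} {p : Fin n → β} {q : Fin n → δ}

lemma coarse_eq_of_fine_eq (h : IsBlockRefinement f c p q) {x y : Fin n} (hxy : p x = p y) :
    q x = q y :=
  le_antisymm (h.coarse_le_of_fine_le x y hxy.le) (h.coarse_le_of_fine_le y x hxy.ge)

lemma comp_lt_comp_iff (h : IsBlockRefinement f c p q) (a b : Fin m) :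
    p (f a) < p (f b) ↔ c a < c b := by
  simp only [lt_iff_not_ge, h.comp_le_comp_iff]

lemma comp_eq_comp_iff (h : IsBlockRefinement f c p q) (a b : Fin m) :
    p (f a) = p (f b) ↔ c a = c b := by
  simp only [le_antisymm_iff, h.comp_le_comp_iff]

lemma coarse_comp_eq (h : IsBlockRefinement f c p q) (a b : Fin m) : q (f a) = q (f b) :=
  (h.coarse_eq_iff_mem_range b (f a)).2 ⟨a, rfl⟩

lemma notMem_range_of_coarse_eq (h : IsBlockRefinement f c p q) {x y : Fin n}
    (hx : x ∉ Set.range f) (hxy : q x = q y) : y ∉ Set.range f := by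
  rintro ⟨b, rfl⟩
  exact hx ((h.coarse_eq_iff_mem_range b x).1 hxy)

lemma coarse_viaFintypeEmbedding (h : IsBlockRefinement f c p q) (σ : Perm (Fin m))
    (x : Fin n) : q (σ.viaFintypeEmbedding f x) = q x := by
  by_cases hx : x ∈ Set.range f
  · obtain ⟨a, rfl⟩ := hx
    rw [Perm.viaFintypeEmbedding_apply_image]
    exact h.coarse_comp_eq _ _
  · rw [Perm.viaFintypeEmbedding_apply_notMem_range _ _ hx]

lemma inv_mul_apply_lt_iff (h : IsBlockRefinement f c p q) (σ : Perm (Fin m))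
    {τ : Perm (Fin n)} (hτ : IsBlockShuffle q τ) (a b : Fin m) :
    (σ.viaFintypeEmbedding f * τ)⁻¹ (f a) < (σ.viaFintypeEmbedding f * τ)⁻¹ (f b) ↔
      σ⁻¹ a < σ⁻¹ b := by
  rw [mul_inv_rev, Perm.mul_apply, Perm.mul_apply, Perm.viaFintypeEmbedding_inv_apply_image,
    Perm.viaFintypeEmbedding_inv_apply_image, hτ.inv_lt_inv_iff (h.coarse_comp_eq _ _),
    h.strictMono.lt_iff_lt]

lemma isBlockShuffle_mul (h : IsBlockRefinement f c p q) {σ : Perm (Fin m)}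
    {τ : Perm (Fin n)} (hσ : IsBlockShuffle c σ) (hτ : IsBlockShuffle q τ) :
    IsBlockShuffle p (σ.viaFintypeEmbedding f * τ) := by
  intro k l hkl hp
  by_cases hk : k ∈ Set.range f
  · obtain ⟨a, rfl⟩ := hk
    obtain ⟨b, rfl⟩ := (h.coarse_eq_iff_mem_range a l).1 (h.coarse_eq_of_fine_eq hp).symm
    exact (h.inv_mul_apply_lt_iff σ hτ a b).2
      (hσ a b (h.strictMono.lt_iff_lt.1 hkl) ((h.comp_eq_comp_iff a b).1 hp))
  · have hl := h.notMem_range_of_coarse_eq hk (h.coarse_eq_of_fine_eq hp)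
    rw [mul_inv_rev, Perm.mul_apply, Perm.mul_apply,
      Perm.viaFintypeEmbedding_inv_apply_notMem_range f σ hk,
      Perm.viaFintypeEmbedding_inv_apply_notMem_range f σ hl]
    exact hτ k l hkl (h.coarse_eq_of_fine_eq hp)

lemma eq_sort_of_isBlockShuffle (h : IsBlockRefinement f c p q) (σ : Perm (Fin m))
    {τ : Perm (Fin n)} (hτ : IsBlockShuffle q τ) :
    σ = Tuple.sort fun a => (σ.viaFintypeEmbedding f * τ)⁻¹ (f a) := by
  have hmono : StrictMono fun a => (σ.viaFintypeEmbedding f * τ)⁻¹ (f (σ a)) := by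
    intro a b hab
    rw [h.inv_mul_apply_lt_iff σ hτ]
    simpa only [Perm.coe_inv, symm_apply_apply] using hab
  exact Tuple.eq_sort_iff.2 ⟨hmono.monotone, fun a b hab heq => absurd heq (hmono hab).ne⟩

lemma exists_factorization (h : IsBlockRefinement f c p q) {π : Perm (Fin n)}
    (hπ : IsBlockShuffle p π) :
    ∃ σ τ, IsBlockShuffle c σ ∧ IsBlockShuffle q τ ∧ σ.viaFintypeEmbedding f * τ = π := by
  set g : Fin m → Fin n := fun a => π⁻¹ (f a)
  set σ := Tuple.sort g
  have hg : StrictMono (g ∘ σ) := (Tuple.monotone_sort g).strictMono_of_injective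
    ((π⁻¹.injective.comp f.injective).comp σ.injective)
  have hσ : IsBlockShuffle c σ := by
    intro a b hab hc
    rw [← hg.lt_iff_lt]
    simp only [g, comp_apply, Perm.coe_inv, apply_symm_apply]
    exact hπ _ _ (h.strictMono hab) ((h.comp_eq_comp_iff a b).2 hc)
  refine ⟨σ, (σ.viaFintypeEmbedding f)⁻¹ * π, hσ, fun k l hkl hq => ?_, mul_inv_cancel_left _ _⟩
  rw [mul_inv_rev, inv_inv, Perm.mul_apply, Perm.mul_apply]
  by_cases hk : k ∈ Set.range f
  · obtain ⟨a, rfl⟩ := hk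
    obtain ⟨b, rfl⟩ := (h.coarse_eq_iff_mem_range a l).1 hq.symm
    rw [Perm.viaFintypeEmbedding_apply_image, Perm.viaFintypeEmbedding_apply_image]
    exact hg (h.strictMono.lt_iff_lt.1 hkl)
  · rw [Perm.viaFintypeEmbedding_apply_notMem_range _ _ hk,
      Perm.viaFintypeEmbedding_apply_notMem_range _ _ (h.notMem_range_of_coarse_eq hk hq)]
    exact hπ k l hkl (h.fine_eq_of_notMem_range k l hk hq)

theorem bijOn_mul (h : IsBlockRefinement f c p q) :
    Set.BijOn (fun x : Perm (Fin m) × Perm (Fin n) => x.1.viaFintypeEmbedding f * x.2)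
      {x | IsBlockShuffle c x.1 ∧ IsBlockShuffle q x.2} {π | IsBlockShuffle p π} := by
  refine ⟨fun x hx => h.isBlockShuffle_mul hx.1 hx.2, fun x hx y hy hxy => ?_, fun π hπ => ?_⟩
  · simp only at hxy
    have hσ : x.1 = y.1 := by
      rw [h.eq_sort_of_isBlockShuffle x.1 hx.2, h.eq_sort_of_isBlockShuffle y.1 hy.2, hxy]
    rw [hσ] at hxy
    exact Prod.ext hσ (mul_left_cancel hxy)
  · obtain ⟨σ, τ, hσ, hτ, rfl⟩ := h.exists_factorization hπ
    exact ⟨(σ, τ), ⟨hσ, hτ⟩, rfl⟩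

lemma sum_inversionTerm_eq_crossSum {I : Type*} (h : IsBlockRefinement f c p q)
    (B : I → I → ℤ) (j : Fin n → I) (σ : Perm (Fin m)) {τ : Perm (Fin n)}
    (hτ : IsBlockShuffle q τ) :
    (∑ k, ∑ l, if p k < p l ∧ q k = q l then
      inversionTerm B j (σ.viaFintypeEmbedding f * τ) k l else 0) =
      crossSum c B (j ∘ f) σ := by
  symm
  refine Fintype.sum_of_injective f f.injective _ _ (fun k hk => ?_) (fun a => ?_)
  · exact Finset.sum_eq_zero fun l _ =>
      if_neg fun hkl => hkl.1.ne (h.fine_eq_of_notMem_range k l hk hkl.2)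
  refine Fintype.sum_of_injective f f.injective _ _
    (fun l hl => if_neg fun hkl => hl ((h.coarse_eq_iff_mem_range a l).1 hkl.2.symm))
    (fun b => ?_)
  simp only [h.comp_lt_comp_iff, h.coarse_comp_eq a b, and_true, inversionTerm,
    h.inv_mul_apply_lt_iff σ hτ, comp_apply]

theorem crossSum_mul {I : Type*} (h : IsBlockRefinement f c p q) (B : I → I → ℤ)
    (j : Fin n → I) (σ : Perm (Fin m)) {τ : Perm (Fin n)} (hτ : IsBlockShuffle q τ) :
    crossSum p B j (σ.viaFintypeEmbedding f * τ) =
      crossSum c B (j ∘ f) σ + crossSum q B (j ∘ σ.viaFintypeEmbedding f) τ := by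
  rw [crossSum_eq_add_crossSum h.coarse_le_of_fine_le, h.sum_inversionTerm_eq_crossSum B j σ hτ,
    crossSum_mul_of_comp_eq q B j (h.coarse_viaFintypeEmbedding σ)]

end IsBlockRefinement

def cut {n : ℕ} (r : ℕ) (k : Fin n) : ℕ := if (k : ℕ) < r then 0 else 1

lemma isShuffle_eq (n r : ℕ) : isShuffle n r = IsBlockShuffle (cut r) := by
  ext σ
  refine forall₂_congr fun k l => forall_congr' fun hkl => imp_congr ?_ Iff.rfl
  grind [cut]

lemma isShuffle3_eq (n r s : ℕ) : isShuffle3 n r s = IsBlockShuffle (cut r + cut (r + s)) := by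
  ext σ
  refine forall₂_congr fun k l => forall_congr' fun hkl => imp_congr ?_ Iff.rfl
  grind [cut, Pi.add_apply]

lemma twoZeta_eq {I : Type*} (n r : ℕ) (B : I → I → ℤ) : twoZeta n r B = crossSum (cut r) B := by
  ext j σ
  refine Finset.sum_congr rfl fun k _ => Finset.sum_congr rfl fun l _ => if_congr ?_ rfl rfl
  grind [cut]

lemma twoZeta3_eq {I : Type*} (n r s : ℕ) (B : I → I → ℤ) :
    twoZeta3 n r s B = crossSum (cut r + cut (r + s)) B := by
  ext j σ
  refine Finset.sum_congr rfl fun k _ => Finset.sum_congr rfl fun l _ => if_congr ?_ rfl rfl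
  grind [cut, Pi.add_apply]

lemma Fin.mem_range_castLEEmb {m n : ℕ} (h : m ≤ n) (x : Fin n) :
    x ∈ Set.range (Fin.castLEEmb h) ↔ (x : ℕ) < m :=
  ⟨by rintro ⟨a, rfl⟩; exact a.isLt, fun hx => ⟨⟨x, hx⟩, rfl⟩⟩

lemma addEmb_val (r m n : ℕ) (h : r + m ≤ n) (a : Fin m) : (addEmb r m n h a : ℕ) = r + a :=
  rfl

lemma mem_range_addEmb (r m n : ℕ) (h : r + m ≤ n) (x : Fin n) :
    x ∈ Set.range (addEmb r m n h) ↔ r ≤ (x : ℕ) ∧ (x : ℕ) < r + m := by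
  refine ⟨by rintro ⟨a, rfl⟩; rw [addEmb_val]; omega, fun hx => ?_⟩
  exact ⟨⟨(x : ℕ) - r, by omega⟩, Fin.ext (by rw [addEmb_val, Fin.val_mk]; omega)⟩

lemma isBlockRefinement_castLEEmb (r s t : ℕ) :
    IsBlockRefinement (Fin.castLEEmb (Nat.le_add_right (r + s) t)) (cut r)
      (cut r + cut (r + s)) (cut (r + s)) := by
  refine ⟨fun _ _ hab => hab, fun a b => ?_, fun x y => ?_, fun a y => ?_, fun x y => ?_⟩ <;>
    simp only [Fin.mem_range_castLEEmb, cut, Pi.add_apply, Fin.castLEEmb_apply, Fin.val_castLE] <;>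
    grind

lemma isBlockRefinement_addEmb (r s t : ℕ) :
    IsBlockRefinement (addEmb r (s + t) (r + s + t) (by omega)) (cut s)
      (cut r + cut (r + s)) (cut r) := by
  refine ⟨fun a b hab => ?_, fun a b => ?_, fun x y => ?_, fun a y => ?_, fun x y => ?_⟩
  · rw [Fin.lt_def, addEmb_val, addEmb_val]
    exact Nat.add_lt_add_left hab r
  all_goals
    simp only [mem_range_addEmb, cut, Pi.add_apply, addEmb_val]
    grind

/-- The two factorizations `Σ_{r,s,t} = Σ_{r,s}·Σ_{r+s,t} = Σ_{s,t}·Σ_{r,s+t}` of the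
three-block shuffles, together with the additivity of the exponents:
`ζ̃(σ̃∘τ) = ζ(σ) + ζ(τ)` and `ζ̃(σ̃'∘ρ) = ζ(σ) + ζ(ρ)` (with respect to the appropriately
permuted words). -/
theorem shuffle_factorizations {I : Type*} (B : I → I → ℤ)
    (r s t : ℕ) :
    Set.BijOn
      (fun p : Equiv.Perm (Fin (r + s)) × Equiv.Perm (Fin (r + s + t)) =>
        extFirst r s t p.1 * p.2)
      {p | isShuffle (r + s) r p.1 ∧ isShuffle (r + s + t) (r + s) p.2}
      {π | isShuffle3 (r + s + t) r s π} ∧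
    Set.BijOn
      (fun p : Equiv.Perm (Fin (s + t)) × Equiv.Perm (Fin (r + s + t)) =>
        extLast r s t p.1 * p.2)
      {p | isShuffle (s + t) s p.1 ∧ isShuffle (r + s + t) r p.2}
      {π | isShuffle3 (r + s + t) r s π} ∧
    (∀ (j : Fin (r + s + t) → I) (σ : Equiv.Perm (Fin (r + s)))
        (τ : Equiv.Perm (Fin (r + s + t))),
      isShuffle (r + s) r σ → isShuffle (r + s + t) (r + s) τ →
      twoZeta3 (r + s + t) r s B j (extFirst r s t σ * τ)
        = twoZeta (r + s) r B (fun k => j (Fin.castLE (Nat.le_add_right (r + s) t) k)) σ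
          + twoZeta (r + s + t) (r + s) B (fun x => j (extFirst r s t σ x)) τ) ∧
    (∀ (j : Fin (r + s + t) → I) (σ : Equiv.Perm (Fin (s + t)))
        (ρ : Equiv.Perm (Fin (r + s + t))),
      isShuffle (s + t) s σ → isShuffle (r + s + t) r ρ →
      twoZeta3 (r + s + t) r s B j (extLast r s t σ * ρ)
        = twoZeta (s + t) s B (fun k => j (addEmb r (s + t) (r + s + t) (by omega) k)) σ
          + twoZeta (r + s + t) r B (fun x => j (extLast r s t σ x)) ρ) := by
  have first := isBlockRefinement_castLEEmb r s t
  have last := isBlockRefinement_addEmb r s t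
  simp only [isShuffle_eq, isShuffle3_eq, twoZeta_eq, twoZeta3_eq]
  exact ⟨first.bijOn_mul, last.bijOn_mul, fun j σ _ _ hτ => first.crossSum_mul B j σ hτ,
    fun j σ _ _ hρ => last.crossSum_mul B j σ hρ⟩
end

section
/- For any word 𝐣 = (j_1,…,j_r) over I, the iterated shuffle product of the one-letter words satisfies (j_1) ∘ (j_2) ∘ ⋯ ∘ (j_r) = Σ_{σ ∈ S_r} v^{η(σ)} · 𝐣_σ in the quantum shuffle algebra g*, where S_r is the full symmetric group on {1,…,r}, 𝐣_σ = (j_{σ(1)},…,j_{σ(r)}), and η(σ) := (1/2)Σ_{k<ℓ, σ⁻¹(ℓ)<σ⁻¹(k)} (α_{j_k},α_{j_ℓ}) − (1/2)Σ_{k<ℓ, σ⁻¹(k)<σ⁻¹(ℓ)} (α_{j_k},α_{j_ℓ}). -/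
open Classical in
/-- The finite set `Σ_{r,n-r}` of shuffles of `Fin n` with block boundary `r`. -/
noncomputable def shuffles (n r : ℕ) : Finset (Equiv.Perm (Fin n)) :=
  Finset.univ.filter fun σ => isShuffle n r σ

/-- The word `𝐣_σ = (j_{σ(1)},…,j_{σ(n)})` obtained by permuting the word `w` by `σ`. -/
def wordPerm {I : Type*} (w : List I) (σ : Equiv.Perm (Fin w.length)) : List I :=
  List.ofFn fun m => w.get (σ m)

/-- The shuffle product of two basis words in the quantum shuffle algebra
`g* = (List I) →₀ R`:  `𝐚 ∘ 𝐛 = ∑_{σ ∈ Σ_{r,s}} v^{ζ(σ)} (𝐚𝐛)_σ` where `r, s` are the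
lengths of `𝐚, 𝐛` and `v^{ζ(σ)} = u^{2ζ(σ)}`. -/
noncomputable def shMulWord {I : Type*} {R : Type*} [CommRing R] (B : I → I → ℤ) (u : Rˣ)
    (a b : List I) : List I →₀ R :=
  ∑ σ ∈ shuffles (a ++ b).length a.length,
    Finsupp.single (wordPerm (a ++ b) σ)
      ((u ^ twoZeta (a ++ b).length a.length B (a ++ b).get σ : Rˣ) : R)

/-- The shuffle product on the quantum shuffle algebra `g* = (List I) →₀ R`, extended
bilinearly from basis words. -/
noncomputable def shMul {I : Type*} {R : Type*} [CommRing R] (B : I → I → ℤ) (u : Rˣ)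
    (x y : List I →₀ R) : List I →₀ R :=
  x.sum fun a ra => y.sum fun b rb => (ra * rb) • shMulWord B u a b

/-- The pairing `(|𝐚|,|𝐛|) = ∑_{k,l} (α_{a_k}, α_{b_l})` of the degrees of two words. -/
def pairWt {I : Type*} (B : I → I → ℤ) (a b : List I) : ℤ :=
  (a.map fun i => (b.map fun i' => B i i').sum).sum

/-- Twice the exponent `η(σ)` for a full permutation `σ`: the sum over all pairs `k < l`
of `±(α_{j_k}, α_{j_l})`, the sign recording whether the pair is inverted by `σ`. -/
def twoEta {I : Type*} (n : ℕ) (B : I → I → ℤ) (j : Fin n → I)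
    (σ : Equiv.Perm (Fin n)) : ℤ :=
  ∑ k : Fin n, ∑ l : Fin n,
    if k < l then
      if σ⁻¹ l < σ⁻¹ k then B (j k) (j l) else -B (j k) (j l)
    else 0

/-- The iterated shuffle product `(j_1) ∘ (j_2) ∘ ⋯ ∘ (j_r)` of one-letter words. -/
noncomputable def iterSingles {I : Type*} {R : Type*} [CommRing R] (B : I → I → ℤ)
    (u : Rˣ) : List I → (List I →₀ R)
  | [] => Finsupp.single [] 1
  | i :: w => shMul B u (Finsupp.single [i] 1) (iterSingles B u w)


open Equiv Finset

section

variable {I : Type*}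

def extPerm {m : ℕ} (σ : Perm (Fin m)) : Perm (Fin (m + 1)) where
  toFun := Fin.cases 0 fun k => (σ k).succ
  invFun := Fin.cases 0 fun k => (σ⁻¹ k).succ
  left_inv x := by cases x using Fin.cases <;> simp
  right_inv x := by cases x using Fin.cases <;> simp

section extPerm

variable {m : ℕ} (σ : Perm (Fin m))

@[simp] lemma extPerm_zero : extPerm σ 0 = 0 := rfl

@[simp] lemma extPerm_succ (k : Fin m) : extPerm σ k.succ = (σ k).succ := rfl

@[simp] lemma extPerm_inv : (extPerm σ)⁻¹ = extPerm σ⁻¹ := by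
  ext x
  cases x using Fin.cases <;> rfl

lemma extPerm_mul_inv_apply_succ (τ : Perm (Fin (m + 1))) (k : Fin m) :
    (extPerm σ * τ)⁻¹ k.succ = τ⁻¹ (σ⁻¹ k).succ := by
  simp [mul_inv_rev]

lemma cons_comp_extPerm (i : I) (g : Fin m → I) :
    Fin.cons i g ∘ extPerm σ = Fin.cons i (g ∘ σ) := by
  funext x
  cases x using Fin.cases <;> rfl

end extPerm

lemma List.get_cons_eq_finCons (i : I) (t : List I) : (i :: t).get = Fin.cons i t.get := by
  funext k
  cases k using Fin.cases <;> rfl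

lemma mem_shuffles {n r : ℕ} {σ : Perm (Fin n)} : σ ∈ shuffles n r ↔ isShuffle n r σ := by
  classical
  simp [shuffles]

lemma isShuffle_one_iff {m : ℕ} (τ : Perm (Fin (m + 1))) :
    isShuffle (m + 1) 1 τ ↔ StrictMono fun k : Fin m => τ⁻¹ k.succ := by
  constructor
  · intro h k l hkl
    exact h k.succ l.succ (Fin.succ_lt_succ_iff.2 hkl) (Or.inr (by simp))
  · intro h k l hkl hkl'
    cases k using Fin.cases with
    | zero => rw [Fin.lt_def] at hkl; simp at hkl'; omega
    | succ k =>
      cases l using Fin.cases with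
      | zero => exact absurd hkl (Fin.not_lt_zero _)
      | succ l => exact h (Fin.succ_lt_succ_iff.1 hkl)

lemma eq_one_of_strictMono_comp {m : ℕ} {α : Type*} [LinearOrder α] {f : Fin m → α}
    {ρ : Perm (Fin m)} (hf : StrictMono f) (hfρ : StrictMono (f ∘ ρ)) : ρ = 1 := by
  have hρ : StrictMono ρ := fun a b hab => hf.lt_iff_lt.1 (hfρ hab)
  ext k
  exact congrArg Fin.val (congrFun hρ.eq_id k)

/-- `twoEta n B j σ` is `signedPairSum B j σ⁻¹`. -/
def signedPairSum {n : ℕ} {α : Type*} [LinearOrder α] (B : I → I → ℤ) (g : Fin n → I)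
    (p : Fin n → α) : ℤ :=
  ∑ k, ∑ l, if k < l then if p l < p k then B (g k) (g l) else -B (g k) (g l) else 0

lemma signedPairSum_strictMono_comp {n : ℕ} {α β : Type*} [LinearOrder α] [LinearOrder β]
    (B : I → I → ℤ) (g : Fin n → I) (p : Fin n → α) {f : α → β} (hf : StrictMono f) :
    signedPairSum B g (f ∘ p) = signedPairSum B g p := by
  simp [signedPairSum, hf.lt_iff_lt]

lemma twoEta_succ {m : ℕ} (B : I → I → ℤ) (j : Fin (m + 1) → I) (π : Perm (Fin (m + 1))) :
    twoEta (m + 1) B j π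
      = twoZeta (m + 1) 1 B j π + signedPairSum B (Fin.tail j) fun k => π⁻¹ k.succ := by
  unfold twoEta twoZeta signedPairSum
  simp [Fin.sum_univ_succ (n := m), Fin.succ_pos, Fin.tail]

lemma twoZeta_mul_left {n r : ℕ} (B : I → I → ℤ) (j : Fin n → I) {ρ : Perm (Fin n)}
    (hρ : ∀ k, (ρ k : ℕ) < r ↔ (k : ℕ) < r) (τ : Perm (Fin n)) :
    twoZeta n r B j (ρ * τ) = twoZeta n r B (j ∘ ρ) τ := by
  unfold twoZeta
  symm
  refine Fintype.sum_equiv ρ _ _ fun k => Fintype.sum_equiv ρ _ _ fun l => ?_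
  have hρ' : ∀ k, r ≤ (ρ k : ℕ) ↔ r ≤ (k : ℕ) := fun k => by
    simpa only [not_lt] using not_congr (hρ k)
  simp [mul_inv_rev, hρ, hρ']

lemma twoEta_extPerm_mul {m : ℕ} (B : I → I → ℤ) (j : Fin (m + 1) → I) (σ : Perm (Fin m))
    {τ : Perm (Fin (m + 1))} (hτ : isShuffle (m + 1) 1 τ) :
    twoEta (m + 1) B j (extPerm σ * τ)
      = twoEta m B (Fin.tail j) σ + twoZeta (m + 1) 1 B (j ∘ extPerm σ) τ := by
  have hblock : ∀ k, (extPerm σ k : ℕ) < 1 ↔ (k : ℕ) < 1 := fun k => by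
    cases k using Fin.cases <;> simp
  have hpos : (fun k => (extPerm σ * τ)⁻¹ k.succ) = (fun k => τ⁻¹ k.succ) ∘ ⇑σ⁻¹ :=
    funext (extPerm_mul_inv_apply_succ σ τ)
  rw [twoEta_succ, twoZeta_mul_left B j hblock, add_comm, hpos,
    signedPairSum_strictMono_comp B _ _ ((isShuffle_one_iff τ).1 hτ)]
  rfl

lemma isShuffle_extPerm_sort_inv_mul {m : ℕ} (π : Perm (Fin (m + 1))) :
    isShuffle (m + 1) 1 ((extPerm (Tuple.sort fun k => π⁻¹ k.succ))⁻¹ * π) := by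
  set σ := Tuple.sort fun k => π⁻¹ k.succ
  have hinj : Function.Injective fun k : Fin m => π⁻¹ k.succ :=
    (π⁻¹).injective.comp (Fin.succ_injective _)
  have hpos : (fun k : Fin m => ((extPerm σ)⁻¹ * π)⁻¹ k.succ)
      = (fun k : Fin m => π⁻¹ k.succ) ∘ σ := by
    funext k
    simp [mul_inv_rev]
  rw [isShuffle_one_iff, hpos]
  exact (Tuple.monotone_sort _).strictMono_of_injective (hinj.comp σ.injective)

lemma extPerm_mul_inj {m : ℕ} {σ₁ σ₂ : Perm (Fin m)} {τ₁ τ₂ : Perm (Fin (m + 1))}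
    (hτ₁ : isShuffle (m + 1) 1 τ₁) (hτ₂ : isShuffle (m + 1) 1 τ₂)
    (h : extPerm σ₁ * τ₁ = extPerm σ₂ * τ₂) : σ₁ = σ₂ ∧ τ₁ = τ₂ := by
  have hpos : ∀ k, τ₁⁻¹ (σ₁⁻¹ k).succ = τ₂⁻¹ (σ₂⁻¹ k).succ := fun k => by
    rw [← extPerm_mul_inv_apply_succ, h, extPerm_mul_inv_apply_succ]
  have hcomp : (fun k => τ₂⁻¹ k.succ) ∘ ⇑(σ₂⁻¹ * σ₁) = fun k => τ₁⁻¹ k.succ := funext fun k => by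
    simpa using (hpos (σ₁ k)).symm
  have hσ : σ₂⁻¹ * σ₁ = 1 := eq_one_of_strictMono_comp ((isShuffle_one_iff τ₂).1 hτ₂)
    (hcomp ▸ (isShuffle_one_iff τ₁).1 hτ₁)
  obtain rfl : σ₁ = σ₂ := (inv_mul_eq_one.1 hσ).symm
  exact ⟨rfl, mul_left_cancel h⟩

lemma sum_perm_succ {M : Type*} [AddCommMonoid M] {m : ℕ} (f : Perm (Fin (m + 1)) → M) :
    ∑ π, f π = ∑ σ : Perm (Fin m), ∑ τ ∈ shuffles (m + 1) 1, f (extPerm σ * τ) := by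
  rw [← Finset.sum_product']
  symm
  refine Finset.sum_bij (fun p _ => extPerm p.1 * p.2) (fun _ _ => mem_univ _) ?_ ?_
    fun _ _ => rfl
  · rintro ⟨σ₁, τ₁⟩ h₁ ⟨σ₂, τ₂⟩ h₂ h
    simp only [mem_product, mem_shuffles] at h₁ h₂
    obtain ⟨rfl, rfl⟩ := extPerm_mul_inj h₁.2 h₂.2 h
    rfl
  · intro π _
    refine ⟨(_, (extPerm (Tuple.sort fun k => π⁻¹ k.succ))⁻¹ * π), ?_, mul_inv_cancel_left _ _⟩
    simpa [mem_shuffles] using isShuffle_extPerm_sort_inv_mul π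

section ShuffleAlgebra

variable {R : Type*} [CommRing R] (B : I → I → ℤ) (u : Rˣ)

lemma shMul_single_one_sum_single {α : Type*} (a : List I) (s : Finset α) (W : α → List I)
    (c : α → R) :
    shMul B u (Finsupp.single a 1) (∑ x ∈ s, Finsupp.single (W x) (c x))
      = ∑ x ∈ s, c x • shMulWord B u a (W x) := by
  unfold shMul
  rw [Finsupp.sum_single_index (by simp [Finsupp.sum]),
    ← Finsupp.sum_finsetSum_index (by simp) (by simp [add_smul])]
  refine Finset.sum_congr rfl fun x _ => ?_
  rw [Finsupp.sum_single_index (by simp), one_mul]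

lemma shMulWord_singleton (i : I) (b : List I) :
    shMulWord B u [i] b = ∑ τ ∈ shuffles (b.length + 1) 1,
      Finsupp.single (List.ofFn (Fin.cons i b.get ∘ τ))
        ((u ^ twoZeta (b.length + 1) 1 B (Fin.cons i b.get) τ : Rˣ) : R) := by
  rw [← List.get_cons_eq_finCons]
  rfl

lemma shMulWord_singleton_ofFn {n : ℕ} (i : I) (g : Fin n → I) :
    shMulWord B u [i] (List.ofFn g) = ∑ τ ∈ shuffles (n + 1) 1,
      Finsupp.single (List.ofFn (Fin.cons i g ∘ τ))
        ((u ^ twoZeta (n + 1) 1 B (Fin.cons i g) τ : Rˣ) : R) := by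
  obtain ⟨b, rfl, rfl⟩ : ∃ b : List I, ∃ h : b.length = n, g = b.get ∘ Fin.cast h.symm :=
    ⟨List.ofFn g, List.length_ofFn, by funext k; simp⟩
  simpa using shMulWord_singleton B u i b

lemma smul_shMulWord_singleton_wordPerm (i : I) (t : List I) (σ : Perm (Fin t.length)) :
    ((u ^ twoEta t.length B t.get σ : Rˣ) : R) • shMulWord B u [i] (wordPerm t σ)
      = ∑ τ ∈ shuffles (t.length + 1) 1,
          Finsupp.single (wordPerm (i :: t) (extPerm σ * τ))
            ((u ^ twoEta (t.length + 1) B (i :: t).get (extPerm σ * τ) : Rˣ) : R) := by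
  have hword : Fin.cons i (t.get ∘ σ) = (i :: t).get ∘ extPerm σ := by
    rw [List.get_cons_eq_finCons, cons_comp_extPerm]
  rw [show wordPerm t σ = List.ofFn (t.get ∘ σ) from rfl, shMulWord_singleton_ofFn,
    Finset.smul_sum, hword]
  refine Finset.sum_congr rfl fun τ hτ => ?_
  rw [Finsupp.smul_single, smul_eq_mul, ← Units.val_mul, ← zpow_add,
    twoEta_extPerm_mul B _ σ (mem_shuffles.1 hτ)]
  rfl

end ShuffleAlgebra

end

theorem iter_singles_eq_general {I : Type*} {R : Type*} [CommRing R] (B : I → I → ℤ)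
    (u : Rˣ) (w : List I) :
    iterSingles B u w
      = ∑ σ : Equiv.Perm (Fin w.length),
          Finsupp.single (wordPerm w σ) ((u ^ twoEta w.length B w.get σ : Rˣ) : R) := by
  induction w with
  | nil =>
    show _ = ∑ σ : Perm (Fin 0), _
    rw [Fintype.sum_unique]
    simp [iterSingles, wordPerm, twoEta]
  | cons i t ih =>
    calc iterSingles B u (i :: t)
        = ∑ σ, ((u ^ twoEta t.length B t.get σ : Rˣ) : R) • shMulWord B u [i] (wordPerm t σ) := by
          rw [iterSingles, ih, shMul_single_one_sum_single]
      _ = ∑ σ, ∑ τ ∈ shuffles (t.length + 1) 1,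
            Finsupp.single (wordPerm (i :: t) (extPerm σ * τ))
              ((u ^ twoEta (t.length + 1) B (i :: t).get (extPerm σ * τ) : Rˣ) : R) :=
          Finset.sum_congr rfl fun σ _ => smul_shMulWord_singleton_wordPerm B u i t σ
      _ = _ := (sum_perm_succ fun π => Finsupp.single (wordPerm (i :: t) π)
            ((u ^ twoEta (t.length + 1) B (i :: t).get π : Rˣ) : R)).symm

/-- The iterated shuffle product of one-letter words:
`(j_1) ∘ ⋯ ∘ (j_r) = ∑_{σ ∈ S_r} v^{η(σ)} 𝐣_σ` in the quantum shuffle algebra. -/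
theorem iter_singles_eq {I : Type*} {R : Type*} [CommRing R] (B : I → I → ℤ)
    (hB : ∀ i j, B i j = B j i) (u : Rˣ) (w : List I) :
    iterSingles B u w
      = ∑ σ : Equiv.Perm (Fin w.length),
          Finsupp.single (wordPerm w σ) ((u ^ twoEta w.length B w.get σ : Rˣ) : R) :=
  iter_singles_eq_general B u w
end

section
/- Let i ≠ j in I with (α_i,α_i) = 2d_i (d_i ≥ 1), and (α_i,α_j) = (α_j,α_i) = d_i·a for an integer a ≤ 0. Then the quantum Serre relation holds in the quantum shuffle algebra g*: Σ_{r=0}^{1−a} (−1)^r · (i^r) ∘ (j) ∘ (i^{1−a−r}) = 0, where (i^m) denotes the word consisting of m copies of i. (Since the divided power (i)^{∘[r]} equals the word (i^r), this is exactly the relation Σ_{r=0}^{1−a_{ij}} (−1)^r (i)^{∘[r]} ∘ (j) ∘ (i)^{∘[1−a_{ij}−r]} = 0.) -/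
/-!
Expanding both shuffle products, the `r`-th term of the Serre sum becomes a sum over the subsets
`T ⊆ {0,…,n}` of size `r + 1` (the final positions of the letters of `i^r j`, with `n = 1 - a`)
and over the position `p ∈ T` of `j`, the word `i^p j i^(n-p)` carrying the coefficient
`(-1)^r v^(E(p,T))`. For fixed `p`, adding or removing the extreme position `0` or `n` that
differs from `p` flips the sign, and it leaves `E(p,T)` unchanged because
`(α_i,α_j) + (α_j,α_i) + (n-1)(α_i,α_i) = 0`. So the coefficient of every word cancels.
-/

open Finset

namespace Finset

variable {α β : Type*} [LinearOrder α] [LinearOrder β]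

def rank (s : Finset α) (x : α) : ℕ := #{y ∈ s | y < x}

lemma rank_map (f : α ↪o β) (s : Finset α) (x : α) :
    (s.map f.toEmbedding).rank (f x) = s.rank x := by
  simp only [rank, filter_map, card_map]
  congr 2
  ext y
  simp

lemma rank_orderEmbOfFin (s : Finset α) {k : ℕ} (h : #s = k) (i : Fin k) :
    s.rank (s.orderEmbOfFin h i) = i := by
  have := rank_map (s.orderEmbOfFin h) univ i
  rw [map_orderEmbOfFin_univ] at this
  rw [this, rank, filter_gt_eq_Iio, Fin.card_Iio]

lemma rank_lt_card {s : Finset α} {x : α} (hx : x ∈ s) : s.rank x < #s :=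
  card_lt_card (filter_ssubset.mpr ⟨x, hx, lt_irrefl x⟩)

lemma rank_strictMonoOn (s : Finset α) : StrictMonoOn s.rank s := by
  intro x hx y _ hxy
  refine card_lt_card ⟨fun z hz => ?_, fun h => ?_⟩
  · simp only [mem_filter] at hz ⊢
    exact ⟨hz.1, hz.2.trans hxy⟩
  · exact lt_irrefl x (mem_filter.mp (h (mem_filter.mpr ⟨hx, hxy⟩))).2

lemma rank_insert {s : Finset α} {x : α} (hx : x ∉ s) (y : α) :
    (insert x s).rank y = s.rank y + if x < y then 1 else 0 := by
  unfold rank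
  rw [filter_insert]
  split_ifs with h
  · rw [card_insert_of_notMem fun hm => hx (mem_filter.mp hm).1]
  · rfl

def balance (C : Finset α) (s : α) : ℤ := ∑ t ∈ C, if t < s then 1 else -1

lemma balance_map (f : α ↪o β) (C : Finset α) (s : α) :
    (C.map f.toEmbedding).balance (f s) = C.balance s := by
  simp [balance]

lemma balance_erase {C : Finset α} {x : α} (hx : x ∈ C) (s : α) :
    (C.erase x).balance s = C.balance s - if x < s then 1 else -1 :=
  sum_erase_eq_sub hx

lemma balance_of_forall_lt {C : Finset α} {s : α} (h : ∀ t ∈ C, t < s) : C.balance s = #C := by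
  rw [balance, sum_congr rfl fun t ht => if_pos (h t ht)]
  simp

lemma balance_of_forall_gt {C : Finset α} {s : α} (h : ∀ t ∈ C, s < t) :
    C.balance s = -#C := by
  rw [balance, sum_congr rfl fun t ht => if_neg (h t ht).asymm]
  simp

end Finset

lemma sum_powersetCard_univ_eq_sum_compl_singleton {M : Type*} [AddCommMonoid M] {N r : ℕ}
    (hN : N = r + 1) (f : Finset (Fin N) → M) :
    ∑ S ∈ powersetCard r univ, f S = ∑ x, f {x}ᶜ := by
  refine (sum_nbij (fun x : Fin N => ({x}ᶜ : Finset (Fin N))) (fun x _ => ?_)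
    (fun x _ y _ h => ?_) (fun S hS => ?_) (fun _ _ => rfl)).symm
  · simp [card_compl, hN]
  · simpa using h
  · obtain ⟨x, hx⟩ := card_eq_one.mp (by
      rw [card_compl, Fintype.card_fin, (mem_powersetCard_univ.mp hS), hN]; simp : #Sᶜ = 1)
    exact ⟨x, mem_coe.mpr (mem_univ x), by simp [← hx]⟩

lemma sum_compl_singleton_sign {N : ℕ} (x : Fin N) :
    ∑ s ∈ ({x}ᶜ : Finset (Fin N)), (if x < s then (1 : ℤ) else -1) = N - 1 - 2 * x := by
  have hlt : ({s ∈ ({x}ᶜ : Finset (Fin N)) | x < s}) = Ioi x := by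
    ext s
    simp only [mem_filter, mem_compl, mem_singleton, mem_Ioi]
    exact ⟨fun h => h.2, fun h => ⟨h.ne', h⟩⟩
  have hnlt : ({s ∈ ({x}ᶜ : Finset (Fin N)) | ¬ x < s}) = Iio x := by
    ext s
    simp only [mem_filter, mem_compl, mem_singleton, mem_Iio, not_lt]
    exact ⟨fun h => lt_of_le_of_ne h.2 h.1, fun h => ⟨h.ne, h.le⟩⟩
  rw [sum_ite, sum_const, sum_const, hlt, hnlt, Fin.card_Ioi, Fin.card_Iio]
  have := x.2
  simp only [nsmul_eq_mul, mul_one, mul_neg]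
  omega

lemma sum_powersetCard_map_valEmbedding {M : Type*} [AddCommMonoid M] (N k : ℕ)
    (g : Finset ℕ → M) :
    ∑ S ∈ powersetCard k (univ : Finset (Fin N)), g (S.map Fin.valEmbedding) =
      ∑ T ∈ powersetCard k (range N), g T := by
  rw [← Nat.Iio_eq_range, ← Fin.map_valEmbedding_univ, powersetCard_map, sum_map]
  rfl

lemma map_valEmbedding_compl {N : ℕ} (S : Finset (Fin N)) :
    Sᶜ.map Fin.valEmbedding = range N \ S.map Fin.valEmbedding := by
  rw [compl_eq_univ_sdiff, Finset.map_sdiff, Fin.map_valEmbedding_univ, Nat.Iio_eq_range]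

lemma sum_range_sum_powersetCard_succ {α M : Type*} [AddCommMonoid M] {U : Finset α} {m : ℕ}
    (hU : #U = m) (G : Finset α → M) (hG : G ∅ = 0) :
    ∑ r ∈ range m, ∑ T ∈ powersetCard (r + 1) U, G T = ∑ T ∈ U.powerset, G T := by
  rw [sum_powerset, hU, sum_range_succ']
  simp [hG]

section Shuffles

variable {n r : ℕ}

lemma card_compl_fin (S : Finset (Fin n)) : #Sᶜ = n - #S := by
  rw [card_compl, Fintype.card_fin]

noncomputable def shufflePermInv (S : Finset (Fin n)) (k : Fin n) : Fin n :=
  if h : (k : ℕ) < #S then S.orderEmbOfFin rfl ⟨k, h⟩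
  else Sᶜ.orderEmbOfFin (card_compl_fin S) ⟨k - #S, by omega⟩

lemma shufflePermInv_mem_iff (S : Finset (Fin n)) (k : Fin n) :
    shufflePermInv S k ∈ S ↔ (k : ℕ) < #S := by
  unfold shufflePermInv
  split_ifs with h
  · simp [h, orderEmbOfFin_mem]
  · simpa [h] using mem_compl.mp (orderEmbOfFin_mem Sᶜ _ _)

lemma shufflePermInv_injective (S : Finset (Fin n)) : Function.Injective (shufflePermInv S) := by
  intro k l hkl
  have hblock : (k : ℕ) < #S ↔ (l : ℕ) < #S := by
    rw [← shufflePermInv_mem_iff, ← shufflePermInv_mem_iff, hkl]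
  unfold shufflePermInv at hkl
  by_cases hk : (k : ℕ) < #S
  · rw [dif_pos hk, dif_pos (hblock.mp hk)] at hkl
    simpa [Fin.ext_iff] using hkl
  · rw [dif_neg hk, dif_neg (hblock.not.mp hk)] at hkl
    have := Fin.val_eq_of_eq ((orderEmbOfFin _ _).injective hkl)
    simp only at this
    omega

/-- The shuffle in `Σ_{#S, n - #S}` whose first block lands on the positions `S`. -/
noncomputable def shufflePerm (S : Finset (Fin n)) : Equiv.Perm (Fin n) :=
  (Equiv.ofBijective _ (Finite.injective_iff_bijective.mp (shufflePermInv_injective S))).symm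

lemma shufflePerm_symm_apply_of_lt (S : Finset (Fin n)) {k : Fin n} (h : (k : ℕ) < #S) :
    (shufflePerm S)⁻¹ k = S.orderEmbOfFin rfl ⟨k, h⟩ :=
  dif_pos h

lemma shufflePerm_symm_apply_mem_iff (S : Finset (Fin n)) (k : Fin n) :
    (shufflePerm S)⁻¹ k ∈ S ↔ (k : ℕ) < #S :=
  shufflePermInv_mem_iff S k

lemma shufflePerm_lt_card_iff (S : Finset (Fin n)) (m : Fin n) :
    ((shufflePerm S m : Fin n) : ℕ) < #S ↔ m ∈ S := by
  rw [← shufflePerm_symm_apply_mem_iff, Equiv.Perm.inv_eq_iff_eq.mpr rfl]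

lemma mem_shuffles_iff {σ : Equiv.Perm (Fin n)} : σ ∈ shuffles n r ↔ isShuffle n r σ := by
  simp [shuffles]

lemma shufflePerm_mem_shuffles (S : Finset (Fin n)) : shufflePerm S ∈ shuffles n #S := by
  refine mem_shuffles_iff.mpr fun k l hkl hblock => ?_
  change shufflePermInv S k < shufflePermInv S l
  have hkl' : (k : ℕ) < l := hkl
  unfold shufflePermInv
  rcases hblock with hl | hk
  · rw [dif_pos (hkl'.trans hl), dif_pos hl]
    exact (orderEmbOfFin _ _).strictMono (Fin.mk_lt_mk.mpr hkl')
  · rw [dif_neg (by omega), dif_neg (by omega)]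
    exact (orderEmbOfFin _ _).strictMono (Fin.mk_lt_mk.mpr (by omega))

lemma card_filter_apply_lt (σ : Equiv.Perm (Fin n)) (hr : r ≤ n) :
    #{m | (σ m : ℕ) < r} = r := by
  have : ({m | (σ m : ℕ) < r} : Finset (Fin n)) =
      ({k | (k : ℕ) < r} : Finset (Fin n)).map σ.symm.toEmbedding := by
    ext m
    simp
  rw [this, card_map, Fin.card_filter_val_lt, min_eq_right hr]

variable {σ : Equiv.Perm (Fin n)} {S : Finset (Fin n)}

lemma shuffles_symm_apply_of_lt (hσ : σ ∈ shuffles n r) (hS : ∀ m, m ∈ S ↔ (σ m : ℕ) < r)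
    (hcard : #S = r) {k : Fin n} (hk : (k : ℕ) < r) :
    σ⁻¹ k = S.orderEmbOfFin hcard ⟨k, hk⟩ := by
  have hr : r ≤ n := hcard ▸ card_le_univ S |>.trans_eq (Fintype.card_fin n)
  have hmono : StrictMono fun k' : Fin r => σ⁻¹ (Fin.castLE hr k') := fun a b hab =>
    mem_shuffles_iff.mp hσ _ _ hab (Or.inl b.2)
  exact congrFun (orderEmbOfFin_unique hcard (fun k' => by simp [hS]) hmono) ⟨k, hk⟩

lemma shuffles_symm_apply_of_le (hσ : σ ∈ shuffles n r) (hS : ∀ m, m ∈ S ↔ (σ m : ℕ) < r)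
    (hcard : #Sᶜ = n - r) {k : Fin n} (hk : r ≤ (k : ℕ)) :
    σ⁻¹ k = Sᶜ.orderEmbOfFin hcard ⟨k - r, by omega⟩ := by
  have hmono : StrictMono fun k' : Fin (n - r) => σ⁻¹ ⟨r + k', by omega⟩ := fun a b hab =>
    mem_shuffles_iff.mp hσ _ _ (Fin.mk_lt_mk.mpr (by simpa using hab)) (Or.inr le_self_add)
  have := congrFun (orderEmbOfFin_unique hcard (fun k' => by simp [hS]) hmono) ⟨k - r, by omega⟩
  simpa [Nat.add_sub_cancel' hk] using this

lemma shufflePerm_eq_of_mem_shuffles (hσ : σ ∈ shuffles n r) (hS : ∀ m, m ∈ S ↔ (σ m : ℕ) < r)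
    (hcard : #S = r) : shufflePerm S = σ := by
  rw [← inv_inj]
  ext k : 1
  change shufflePermInv S k = σ⁻¹ k
  unfold shufflePermInv
  split_ifs with hk
  · rw [shuffles_symm_apply_of_lt hσ hS hcard (hcard ▸ hk), orderEmbOfFin_eq_orderEmbOfFin_iff]
  · rw [shuffles_symm_apply_of_le hσ hS (by rw [card_compl_fin, hcard]) (hcard ▸ not_lt.mp hk),
      orderEmbOfFin_eq_orderEmbOfFin_iff]
    simp [hcard]

lemma sum_shuffles_eq_sum_powersetCard {M : Type*} [AddCommMonoid M] (hr : r ≤ n)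
    (f : Equiv.Perm (Fin n) → M) :
    ∑ σ ∈ shuffles n r, f σ = ∑ S ∈ powersetCard r univ, f (shufflePerm S) := by
  refine sum_nbij' (fun σ => ({m | (σ m : ℕ) < r} : Finset (Fin n))) shufflePerm
    (fun σ _ => ?_) (fun S hS => ?_) (fun σ hσ => ?_) (fun S hS => ?_) (fun σ hσ => ?_)
  · simpa using card_filter_apply_lt σ hr
  · rw [← (mem_powersetCard_univ.mp hS)]
    exact shufflePerm_mem_shuffles S
  · exact shufflePerm_eq_of_mem_shuffles hσ (by simp) (card_filter_apply_lt σ hr)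
  · ext m
    simp [← (mem_powersetCard_univ.mp hS), shufflePerm_lt_card_iff]
  · rw [shufflePerm_eq_of_mem_shuffles hσ (by simp) (card_filter_apply_lt σ hr)]

end Shuffles

section TwoZeta

variable {I : Type*} {n r : ℕ} (B : I → I → ℤ) (w : Fin n → I) {S : Finset (Fin n)}

lemma twoZeta_shufflePerm (hS : #S = r) :
    twoZeta n r B w (shufflePerm S) =
      ∑ s ∈ S, ∑ t ∈ Sᶜ, if t < s then B (w (shufflePerm S s)) (w (shufflePerm S t))
        else -B (w (shufflePerm S s)) (w (shufflePerm S t)) := by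
  subst hS
  unfold twoZeta
  rw [← Equiv.sum_comp (shufflePerm S)]
  refine (sum_congr rfl fun s _ => (Equiv.sum_comp (shufflePerm S) _).symm).trans ?_
  simp only [shufflePerm_lt_card_iff, ← not_lt, Equiv.Perm.coe_inv, Equiv.symm_apply_apply,
    ite_and, ← mem_compl, sum_ite_irrel, sum_const_zero, sum_ite_mem, univ_inter]

lemma twoZeta_shufflePerm_of_const (hS : #S = r) {c : I}
    (hc : ∀ l : Fin n, r ≤ (l : ℕ) → w l = c) :
    twoZeta n r B w (shufflePerm S) = ∑ s ∈ S, B (w (shufflePerm S s)) c * Sᶜ.balance s := by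
  rw [twoZeta_shufflePerm B w hS]
  refine sum_congr rfl fun s _ => ?_
  rw [balance, mul_sum]
  refine sum_congr rfl fun t ht => ?_
  rw [hc (shufflePerm S t) (by rw [← hS, ← not_lt, shufflePerm_lt_card_iff]; exact mem_compl.mp ht)]
  split_ifs <;> ring

end TwoZeta

section Words

variable {I : Type*} (i j : I)

def serreWord (p m : ℕ) : List I := List.replicate p i ++ [j] ++ List.replicate m i

lemma length_serreWord (p m : ℕ) : (serreWord i j p m).length = p + m + 1 := by
  simp only [serreWord, List.length_append, List.length_replicate, List.length_singleton]
  omega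

lemma getElem_serreWord (p m k : ℕ) (hk : k < (serreWord i j p m).length) :
    (serreWord i j p m)[k] = if k = p then j else i := by
  have hk' := hk
  rw [length_serreWord] at hk'
  simp only [serreWord, List.getElem_append, List.getElem_replicate, List.length_append,
    List.length_replicate, List.length_singleton, List.getElem_singleton]
  split_ifs <;> first | rfl | omega

lemma get_eq_ite_of_eq_serreWord {w : List I} {p m : ℕ} (h : w = serreWord i j p m)
    {x : Fin w.length} (hx : (x : ℕ) = p) (k : Fin w.length) :
    w.get k = if k = x then j else i :=
  (List.getElem_of_eq h _).trans
    ((getElem_serreWord ..).trans (if_congr (by rw [Fin.ext_iff, hx]) rfl rfl))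

lemma serreWord_append_replicate (p m l : ℕ) :
    serreWord i j p m ++ List.replicate l i = serreWord i j p (m + l) := by
  simp [serreWord]

lemma ofFn_eq_serreWord {N : ℕ} (x : Fin N) :
    List.ofFn (fun m => if m = x then j else i) = serreWord i j x (N - 1 - x) := by
  refine List.ext_getElem (by rw [List.length_ofFn, length_serreWord]; omega) fun k hk _ => ?_
  simp [getElem_serreWord, Fin.ext_iff]

lemma wordPerm_eq_serreWord {w : List I} {x : Fin w.length}
    (hw : ∀ k : Fin w.length, w.get k = if k = x then j else i)
    (σ : Equiv.Perm (Fin w.length)) :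
    wordPerm w σ = serreWord i j (σ⁻¹ x) (w.length - 1 - σ⁻¹ x) := by
  rw [wordPerm, ← ofFn_eq_serreWord]
  congr 1
  ext m
  exact (hw (σ m)).trans (if_congr Equiv.Perm.eq_inv_iff_eq.symm rfl rfl)

end Words

section Products

variable {I R : Type*} [CommRing R] (B : I → I → ℤ) (u : Rˣ)

lemma shMul_single_right (x : List I →₀ R) (b : List I) (rb : R) :
    shMul B u x (Finsupp.single b rb) = x.sum fun a ra => (ra * rb) • shMulWord B u a b := by
  unfold shMul
  congr 1
  ext a ra : 2
  rw [Finsupp.sum_single_index (by simp)]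

lemma shMul_single_single (a b : List I) (ra rb : R) :
    shMul B u (Finsupp.single a ra) (Finsupp.single b rb) = (ra * rb) • shMulWord B u a b := by
  rw [shMul_single_right, Finsupp.sum_single_index (by simp)]

lemma shMul_sum_single_single {ι : Type*} (s : Finset ι) (a : ι → List I) (c : ι → R)
    (b : List I) (rb : R) :
    shMul B u (∑ k ∈ s, Finsupp.single (a k) (c k)) (Finsupp.single b rb) =
      ∑ k ∈ s, (c k * rb) • shMulWord B u (a k) b := by
  rw [shMul_single_right, ← Finsupp.sum_finsetSum_index (by simp) (by simp [add_mul, add_smul])]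
  exact sum_congr rfl fun k _ => Finsupp.sum_single_index (by simp)

lemma shMulWord_replicate_singleton (i j : I) (r : ℕ) :
    shMulWord B u (List.replicate r i) [j] =
      ∑ q ∈ range (r + 1), Finsupp.single (serreWord i j q (r - q))
        ((u ^ (B i j * ((r : ℤ) - 2 * q)) : Rˣ) : R) := by
  have hN : (List.replicate r i ++ [j]).length = r + 1 := by simp
  have hw := get_eq_ite_of_eq_serreWord i j
    (show List.replicate r i ++ [j] = serreWord i j r 0 by simp [serreWord])
    (x := ⟨r, by omega⟩) rfl
  rw [shMulWord, sum_shuffles_eq_sum_powersetCard (by simp),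
    sum_powersetCard_univ_eq_sum_compl_singleton (by simp), ← hN, ← Fin.sum_univ_eq_sum_range]
  refine sum_congr rfl fun x _ => ?_
  have hS : #({x}ᶜ : Finset (Fin _)) = (List.replicate r i).length := by
    simp [card_compl, hN]
  have hj : (shufflePerm {x}ᶜ)⁻¹ ⟨r, by omega⟩ = x := by
    simpa [hS] using (shufflePerm_symm_apply_mem_iff {x}ᶜ ⟨r, by omega⟩).not
  have hi : ∀ s ∈ ({x}ᶜ : Finset (Fin _)),
      (List.replicate r i ++ [j]).get (shufflePerm {x}ᶜ s) = i := fun s hs => by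
    have hlt := (shufflePerm_lt_card_iff _ s).mpr hs
    rw [hS, List.length_replicate] at hlt
    rw [hw, if_neg (Fin.ne_of_val_ne hlt.ne)]
  rw [wordPerm_eq_serreWord i j hw, hj, twoZeta_shufflePerm_of_const B _ hS (c := j) fun l hl => by
      rw [hw, if_pos (Fin.ext (show (l : ℕ) = r by rw [List.length_replicate] at hl; omega))],
    sum_congr rfl fun s hs => by rw [hi s hs, compl_compl, balance, sum_singleton], ← mul_sum,
    sum_compl_singleton_sign, show ((List.replicate r i ++ [j]).length : ℤ) = r + 1 by simp]
  congr 2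
  · omega
  · rw [add_sub_cancel_right]

lemma twoZeta_shufflePerm_of_get_eq_ite (i j : I) {w : List I} {y : Fin w.length}
    (hw : ∀ k : Fin w.length, w.get k = if k = y then j else i)
    {S : Finset (Fin w.length)} {r : ℕ} (hS : #S = r) (hy : (y : ℕ) < r) :
    twoZeta w.length r B w.get (shufflePerm S) =
      ∑ s ∈ S, B (if s = (shufflePerm S)⁻¹ y then j else i) i * Sᶜ.balance s := by
  rw [twoZeta_shufflePerm_of_const B _ hS (c := i) fun l hl => by
    rw [hw, if_neg (Fin.ne_of_val_ne (by omega))]]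
  refine sum_congr rfl fun s _ => ?_
  rw [hw, if_congr Equiv.Perm.eq_inv_iff_eq.symm rfl rfl]

/-- Twice the exponent `ζ` of a shuffle of `i^q j i^(r-q)` with `i^(n-r)`, read off the final
positions `T` of the first factor and the final position `p` of `j`. -/
def crossExponent (i j : I) (n p : ℕ) (T : Finset ℕ) : ℤ :=
  ∑ s ∈ T, B (if s = p then j else i) i * (range (n + 1) \ T).balance s

lemma crossExponent_map_valEmbedding (i j : I) {n N : ℕ} (hN : N = n + 1) (S : Finset (Fin N))
    (x : Fin N) :
    crossExponent B i j n x (S.map Fin.valEmbedding) =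
      ∑ s ∈ S, B (if s = x then j else i) i * Sᶜ.balance s := by
  subst hN
  rw [crossExponent, sum_map, ← map_valEmbedding_compl]
  refine sum_congr rfl fun s _ => ?_
  congr 1
  · exact congrArg (B · i) (if_congr Fin.val_inj rfl rfl)
  · exact balance_map (Fin.valOrderEmb _) Sᶜ s

lemma shMulWord_serreWord_replicate (i j : I) {n r q : ℕ} (hq : q ≤ r) (hr : r ≤ n) :
    shMulWord B u (serreWord i j q (r - q)) (List.replicate (n - r) i) =
      ∑ T ∈ powersetCard (r + 1) (range (n + 1)), ∑ p ∈ T,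
        if T.rank p = q then
          Finsupp.single (serreWord i j p (n - p)) ((u ^ crossExponent B i j n p T : Rˣ) : R)
        else 0 := by
  have hlen : (serreWord i j q (r - q)).length = r + 1 := by rw [length_serreWord]; omega
  have hword : serreWord i j q (r - q) ++ List.replicate (n - r) i = serreWord i j q (n - q) := by
    rw [serreWord_append_replicate]; congr 1; omega
  have hN : (serreWord i j q (r - q) ++ List.replicate (n - r) i).length = n + 1 := by
    rw [hword, length_serreWord]; omega
  have hw := get_eq_ite_of_eq_serreWord i j hword (x := ⟨q, by omega⟩) rfl
  rw [shMulWord, sum_shuffles_eq_sum_powersetCard (by simp), ← hN, ← hlen,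
    ← sum_powersetCard_map_valEmbedding]
  refine sum_congr rfl fun S hS => ?_
  have hS' := mem_powersetCard_univ.mp hS
  have hqS : q < #S := by omega
  have hxS := orderEmbOfFin_mem S rfl ⟨q, hqS⟩
  have hrank : (S.map Fin.valEmbedding).rank (S.orderEmbOfFin rfl ⟨q, hqS⟩ : ℕ) = q :=
    (rank_map (Fin.valOrderEmb _) S _).trans (rank_orderEmbOfFin S rfl _)
  rw [wordPerm_eq_serreWord i j hw, twoZeta_shufflePerm_of_get_eq_ite B i j hw hS' (show q < _ by omega),
    shufflePerm_symm_apply_of_lt S hqS, ← crossExponent_map_valEmbedding B i j hN,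
    sum_eq_single_of_mem _ (mem_map_of_mem _ hxS)]
  · simp only [Fin.valEmbedding_apply]
    rw [if_pos hrank]
    congr 2
    omega
  intro p hp hpx
  refine if_neg fun h => hpx ((rank_strictMonoOn _).injOn hp (mem_map_of_mem _ hxS) ?_)
  exact h.trans hrank.symm

/-- The total exponent `2ζ` of the term `(T, p)` of `(i^r ∘ j) ∘ i^(n-r)`, where `r + 1 = #T`:
the first summand comes from `i^r ∘ j`, which puts `j` at position `T.rank p`. -/
def serreExponent (i j : I) (n p : ℕ) (T : Finset ℕ) : ℤ :=
  B i j * ((#T : ℤ) - 1 - 2 * T.rank p) + crossExponent B i j n p T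

lemma shMul_shMul_replicate (i j : I) {n r : ℕ} (hr : r ≤ n) :
    shMul B u (shMul B u (Finsupp.single (List.replicate r i) 1) (Finsupp.single [j] 1))
        (Finsupp.single (List.replicate (n - r) i) 1) =
      ∑ T ∈ powersetCard (r + 1) (range (n + 1)), ∑ p ∈ T,
        Finsupp.single (serreWord i j p (n - p)) ((u ^ serreExponent B i j n p T : Rˣ) : R) := by
  rw [shMul_single_single, one_mul, one_smul, shMulWord_replicate_singleton,
    shMul_sum_single_single]
  rw [sum_congr rfl fun q hq => by
    rw [shMulWord_serreWord_replicate B u i j (Nat.le_of_lt_succ (mem_range.mp hq)) hr]]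
  simp only [smul_sum, smul_ite, smul_zero, Finsupp.smul_single, smul_eq_mul, mul_one]
  rw [sum_comm]
  refine sum_congr rfl fun T hT => ?_
  rw [sum_comm]
  refine sum_congr rfl fun p hp => ?_
  have hcard := (mem_powersetCard.mp hT).2
  rw [sum_ite_eq, if_pos (mem_range.mpr (hcard ▸ rank_lt_card hp)), serreExponent, zpow_add,
    Units.val_mul, hcard, Nat.cast_succ, add_sub_cancel_right]

end Products

section Cancellation

variable {I R : Type*} [CommRing R] (B : I → I → ℤ) (u : Rˣ) {i j : I} {n p x : ℕ}
  {T : Finset ℕ}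

lemma sum_apply_ite_eq_card_mul_add {M : Type*} [AddCommGroup M] (f : I → M) (p : ℕ)
    (T : Finset ℕ) :
    ∑ s ∈ T, f (if s = p then j else i) = #T • f i + if p ∈ T then f j - f i else 0 := by
  rw [← sum_ite_eq' T p (fun _ => f j - f i), ← sum_const, ← sum_add_distrib]
  refine sum_congr rfl fun s _ => ?_
  split_ifs <;> abel

lemma serreExponent_insert (hx : x ∈ range (n + 1)) (hxT : x ∉ T) (hxp : x ≠ p) :
    serreExponent B i j n p (insert x T) = serreExponent B i j n p T
      + B i j * (1 - 2 * if x < p then 1 else 0)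
      + B i i * (range (n + 1) \ insert x T).balance x
      - ∑ s ∈ T, B (if s = p then j else i) i * if x < s then 1 else -1 := by
  have hxC : x ∈ range (n + 1) \ T := mem_sdiff.mpr ⟨hx, hxT⟩
  rw [serreExponent, serreExponent, crossExponent, crossExponent, card_insert_of_notMem hxT,
    rank_insert hxT, sum_insert hxT, if_neg hxp, sdiff_insert]
  simp only [balance_erase hxC, mul_sub, sum_sub_distrib]
  push_cast
  ring

lemma serreExponent_insert_of_extreme (hrel : B i j + B j i + ((n : ℤ) - 1) * B i i = 0)
    (hT : T ⊆ range (n + 1)) (hpT : p ∈ T) (hxT : x ∉ T) (hxp : x ≠ p) (hx : x = 0 ∨ x = n) :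
    serreExponent B i j n p (insert x T) = serreExponent B i j n p T := by
  have hxU : x ∈ range (n + 1) := by rcases hx with rfl | rfl <;> simp
  have hsub : insert x T ⊆ range (n + 1) := insert_subset hxU hT
  have hcard : (#(range (n + 1) \ insert x T) : ℤ) = n - #T := by
    have := card_le_card hsub
    rw [card_sdiff_of_subset hsub, card_insert_of_notMem hxT, card_range] at *
    omega
  have hletters := sum_apply_ite_eq_card_mul_add (i := i) (j := j) (B · i) p T
  rw [if_pos hpT, nsmul_eq_mul] at hletters
  rw [serreExponent_insert B hxU hxT hxp]
  rcases hx with rfl | rfl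
  · have hpos : ∀ s ∈ T, 0 < s := fun s hs => Nat.pos_of_ne_zero (ne_of_mem_of_not_mem hs hxT)
    rw [if_pos (Nat.pos_of_ne_zero hxp.symm), balance_of_forall_gt fun t ht => ?_,
      sum_congr rfl fun s hs => by rw [if_pos (hpos s hs), mul_one], hletters, hcard]
    · linear_combination -hrel
    · exact Nat.pos_of_ne_zero fun h => (mem_sdiff.mp ht).2 (h ▸ mem_insert_self 0 T)
  · have hle : ∀ s ∈ T, s ≤ x := fun s hs => Nat.le_of_lt_succ (mem_range.mp (hT hs))
    rw [if_neg (not_lt.mpr (hle p hpT)), balance_of_forall_lt fun t ht => ?_,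
      sum_congr rfl fun s hs => by rw [if_neg (not_lt.mpr (hle s hs)), mul_neg, mul_one],
      sum_neg_distrib, hletters, hcard]
    · linear_combination hrel
    · obtain ⟨htU, htT⟩ := mem_sdiff.mp ht
      exact lt_of_le_of_ne (Nat.le_of_lt_succ (mem_range.mp htU))
        fun h => htT (h ▸ mem_insert_self _ T)

lemma sum_filter_mem_serreExponent_eq_zero (hrel : B i j + B j i + ((n : ℤ) - 1) * B i i = 0)
    (hn : 1 ≤ n) :
    ∑ T ∈ (range (n + 1)).powerset with p ∈ T,
      (-1 : R) ^ (#T - 1) * ((u ^ serreExponent B i j n p T : Rˣ) : R) = 0 := by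
  set x := if p = n then 0 else n
  have hxp : x ≠ p := by unfold x; split_ifs <;> omega
  have hx : x = 0 ∨ x = n := by unfold x; split_ifs <;> simp
  have hxU : x ∈ range (n + 1) := by rcases hx with h | h <;> simp [h]
  rw [sum_filter, ← insert_erase hxU, sum_powerset_insert (notMem_erase x _), ← sum_add_distrib]
  refine sum_eq_zero fun T hT => ?_
  have hTU : T ⊆ (range (n + 1)).erase x := mem_powerset.mp hT
  have hxT : x ∉ T := fun h => notMem_erase x _ (hTU h)
  simp only [mem_insert, hxp.symm, false_or]
  split_ifs with hpT
  · obtain ⟨k, hk⟩ := Nat.exists_eq_add_one.mpr (card_pos.mpr ⟨p, hpT⟩)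
    rw [serreExponent_insert_of_extreme B hrel (hTU.trans (erase_subset _ _)) hpT hxT hxp hx,
      card_insert_of_notMem hxT, hk, Nat.add_sub_cancel, Nat.add_sub_cancel, pow_succ]
    ring
  · exact add_zero 0

end Cancellation

theorem shuffle_quantum_serre_general {I : Type*} {R : Type*} [CommRing R] (B : I → I → ℤ)
    (u : Rˣ) (i j : I)
    (d : ℕ) (hBii : B i i = 2 * d) (a : ℤ) (ha : a ≤ 0)
    (hBij : B i j = d * a) (hBji : B j i = d * a) :
    ∑ r ∈ Finset.range ((1 - a).toNat + 1),
        ((-1 : R) ^ r) •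
          shMul B u
            (shMul B u (Finsupp.single (List.replicate r i) (1 : R))
              (Finsupp.single [j] 1))
            (Finsupp.single (List.replicate ((1 - a).toNat - r) i) 1)
      = 0 := by
  obtain ⟨n, hn, rfl⟩ : ∃ n : ℕ, 1 ≤ n ∧ a = 1 - n := ⟨(1 - a).toNat, by omega, by omega⟩
  have hrel : B i j + B j i + ((n : ℤ) - 1) * B i i = 0 := by
    rw [hBij, hBji, hBii]
    ring
  simp only [sub_sub_cancel, Int.toNat_natCast]
  calc _ = ∑ r ∈ range (n + 1), ∑ T ∈ powersetCard (r + 1) (range (n + 1)), ∑ p ∈ T,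
          Finsupp.single (serreWord i j p (n - p))
            ((-1 : R) ^ (#T - 1) * ((u ^ serreExponent B i j n p T : Rˣ) : R)) := by
        refine sum_congr rfl fun r hr => ?_
        rw [shMul_shMul_replicate B u i j (Nat.le_of_lt_succ (mem_range.mp hr)), smul_sum]
        refine sum_congr rfl fun T hT => ?_
        simp only [smul_sum, Finsupp.smul_single, smul_eq_mul, (mem_powersetCard.mp hT).2,
          Nat.add_sub_cancel]
    _ = ∑ p ∈ range (n + 1), ∑ T ∈ (range (n + 1)).powerset with p ∈ T,
          Finsupp.single (serreWord i j p (n - p))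
            ((-1 : R) ^ (#T - 1) * ((u ^ serreExponent B i j n p T : Rˣ) : R)) := by
        rw [sum_range_sum_powersetCard_succ (card_range _) _ (sum_empty), sum_comm']
        intro T p
        simp only [mem_powerset, mem_filter]
        exact ⟨fun h => ⟨⟨h.1, h.2⟩, h.1 h.2⟩, fun h => ⟨h.1.1, h.1.2⟩⟩
    _ = 0 := sum_eq_zero fun p _ => by
        rw [← Finsupp.single_finsetSum, sum_filter_mem_serreExponent_eq_zero B u hrel hn,
          Finsupp.single_zero]

/-- The quantum Serre relation in the quantum shuffle algebra: for `i ≠ j` with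
`(α_i,α_i) = 2d_i` and `(α_i,α_j) = (α_j,α_i) = d_i·a` with `a ≤ 0`,
`∑_{r=0}^{1-a} (-1)^r (i^r) ∘ (j) ∘ (i^{1-a-r}) = 0`. -/
theorem shuffle_quantum_serre {I : Type*} {R : Type*} [CommRing R] (B : I → I → ℤ)
    (hB : ∀ i j, B i j = B j i) (u : Rˣ) (i j : I) (hij : i ≠ j)
    (d : ℕ) (hd : 1 ≤ d) (hBii : B i i = 2 * d) (a : ℤ) (ha : a ≤ 0)
    (hBij : B i j = d * a) (hBji : B j i = d * a) :
    ∑ r ∈ Finset.range ((1 - a).toNat + 1),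
        ((-1 : R) ^ r) •
          shMul B u
            (shMul B u (Finsupp.single (List.replicate r i) (1 : R))
              (Finsupp.single [j] 1))
            (Finsupp.single (List.replicate ((1 - a).toNat - r) i) 1)
      = 0 :=
  shuffle_quantum_serre_general B u i j d hBii a ha hBij hBji
end

section
/- Let L : I → I → ℤ be an arbitrary function, written ⟨α_i,α_j⟩ := L i j, with symmetrization (α_i,α_j) := ⟨α_i,α_j⟩ + ⟨α_j,α_i⟩. Fix integers t, s' ≥ 0 with n := t + s', a word 𝐣 = (j_1,…,j_n) over I, and σ ∈ Σ_{t,s'}; set 𝐡 := 𝐣_σ, i.e. h_m = j_{σ(m)} (equivalently j_k = h_{σ⁻¹(k)}). Then the following identity holds in ℤ (the paper's identity multiplied through by 2, where the first block indices {1,…,t} play the role of U and the last block {t+1,…,n} the role of W): 2·Σ_{1≤k<ℓ≤n} ⟨α_{h_ℓ},α_{h_k}⟩ − 2·Σ_{1≤k<ℓ≤t} ⟨α_{j_ℓ},α_{j_k}⟩ − 2·Σ_{t+1≤k<ℓ≤n} ⟨α_{j_ℓ},α_{j_k}⟩ + 2ζ(σ) − Σ_{1≤k≤t<ℓ≤n}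 (⟨α_{j_k},α_{j_ℓ}⟩ + ⟨α_{j_ℓ},α_{j_k}⟩) = −2·Σ_{1≤k<ℓ≤n} ⟨α_{h_k},α_{h_ℓ}⟩ + 2·Σ_{1≤k<ℓ≤t} ⟨α_{j_k},α_{j_ℓ}⟩ + 2·Σ_{t+1≤k<ℓ≤n} ⟨α_{j_k},α_{j_ℓ}⟩ + 2·Σ_{1≤k≤t<ℓ≤n, σ⁻¹(k)>σ⁻¹(ℓ)} (α_{j_k},α_{j_ℓ}), where 2ζ(σ) := Σ_{1≤k≤t<ℓ≤n, σ⁻¹(ℓ)<σ⁻¹(k)} (α_{j_k},α_{j_ℓ}) − Σ_{1≤k≤t<ℓ≤n, σ⁻¹(k)<σ⁻¹(ℓ)} (α_{j_k},α_{j_ℓ}). -/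
/-- Twice the exponent `ζ(σ)` with respect to the symmetrized form
`(α_i,α_j) = ⟨α_i,α_j⟩ + ⟨α_j,α_i⟩`: the sum over cross-block pairs `(k,l)` of
`±(α_{j_k},α_{j_l})`, the sign recording whether the pair is inverted by `σ`. -/
def twoZetaSym {I : Type*} (n t : ℕ) (L : I → I → ℤ) (j : Fin n → I)
    (σ : Equiv.Perm (Fin n)) : ℤ :=
  ∑ k : Fin n, ∑ l : Fin n,
    if (k : ℕ) < t ∧ t ≤ (l : ℕ) then
      if σ⁻¹ l < σ⁻¹ k then L (j k) (j l) + L (j l) (j k)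
      else -(L (j k) (j l) + L (j l) (j k))
    else 0

section PairSums

variable {ι M : Type*} [Fintype ι] [LinearOrder ι] [AddCommMonoid M]

theorem sum_lt_swap_add_sum_lt (f : ι → ι → M) :
    (∑ k, ∑ l, if k < l then f l k else 0) + (∑ k, ∑ l, if k < l then f k l else 0)
      = ∑ k, ∑ l, if k ≠ l then f k l else 0 := by
  rw [Finset.sum_comm (f := fun k l => if k < l then f l k else 0), ← Finset.sum_add_distrib]
  refine Finset.sum_congr rfl fun k _ => ?_
  rw [← Finset.sum_add_distrib]
  refine Finset.sum_congr rfl fun l _ => ?_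
  rcases lt_trichotomy k l with h | rfl | h
  · simp [h, h.ne, h.not_gt]
  · simp
  · simp [h, h.ne', h.not_gt]

theorem sum_ne_comp_perm (σ : Equiv.Perm ι) (f : ι → ι → M) :
    (∑ k, ∑ l, if k ≠ l then f (σ k) (σ l) else 0) = ∑ k, ∑ l, if k ≠ l then f k l else 0 := by
  rw [← Equiv.sum_comp σ (fun k => ∑ l, if k ≠ l then f k l else 0)]
  refine Finset.sum_congr rfl fun k _ => ?_
  rw [← Equiv.sum_comp σ (fun l => if σ k ≠ l then f (σ k) l else 0)]
  simp only [σ.injective.ne_iff]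

theorem sum_lt_swap_add_sum_lt_comp_perm (σ : Equiv.Perm ι) (f : ι → ι → M) :
    (∑ k, ∑ l, if k < l then f (σ l) (σ k) else 0) + (∑ k, ∑ l, if k < l then f (σ k) (σ l) else 0)
      = (∑ k, ∑ l, if k < l then f l k else 0) + ∑ k, ∑ l, if k < l then f k l else 0 := by
  rw [sum_lt_swap_add_sum_lt (fun k l => f (σ k) (σ l)), sum_lt_swap_add_sum_lt,
    sum_ne_comp_perm]

end PairSums

theorem sum_lt_eq_sum_blocks {M : Type*} [AddCommMonoid M] {n : ℕ} (t : ℕ)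
    (f : Fin n → Fin n → M) :
    (∑ k : Fin n, ∑ l : Fin n, if k < l then f k l else 0)
      = (∑ k : Fin n, ∑ l : Fin n, if k < l ∧ (l : ℕ) < t then f k l else 0)
        + (∑ k : Fin n, ∑ l : Fin n, if t ≤ (k : ℕ) ∧ k < l then f k l else 0)
        + ∑ k : Fin n, ∑ l : Fin n, if (k : ℕ) < t ∧ t ≤ (l : ℕ) then f k l else 0 := by
  simp only [← Finset.sum_add_distrib]
  refine Finset.sum_congr rfl fun k _ => Finset.sum_congr rfl fun l _ => ?_
  simp only [Fin.lt_def]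
  split_ifs <;> first | (exfalso; omega) | simp

theorem twoZetaSym_eq {I : Type*} (n t : ℕ) (L : I → I → ℤ) (j : Fin n → I)
    (σ : Equiv.Perm (Fin n)) :
    twoZetaSym n t L j σ
      = 2 * (∑ k : Fin n, ∑ l : Fin n, if (k : ℕ) < t ∧ t ≤ (l : ℕ) ∧ σ⁻¹ l < σ⁻¹ k
          then L (j k) (j l) + L (j l) (j k) else 0)
        - ∑ k : Fin n, ∑ l : Fin n,
          if (k : ℕ) < t ∧ t ≤ (l : ℕ) then L (j k) (j l) + L (j l) (j k) else 0 := by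
  simp only [twoZetaSym, Finset.mul_sum, ← Finset.sum_sub_distrib]
  refine Finset.sum_congr rfl fun k _ => Finset.sum_congr rfl fun l _ => ?_
  split_ifs <;> first | ring1 | (exfalso; tauto)

theorem exponent_equality_general {I : Type*} (L : I → I → ℤ) (t s' : ℕ)
    (j : Fin (t + s') → I) (σ : Equiv.Perm (Fin (t + s'))) :
    2 * (∑ k : Fin (t + s'), ∑ l : Fin (t + s'),
          if k < l then L (j (σ l)) (j (σ k)) else 0)
      - 2 * (∑ k : Fin (t + s'), ∑ l : Fin (t + s'),
          if k < l ∧ (l : ℕ) < t then L (j l) (j k) else 0)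
      - 2 * (∑ k : Fin (t + s'), ∑ l : Fin (t + s'),
          if t ≤ (k : ℕ) ∧ k < l then L (j l) (j k) else 0)
      + twoZetaSym (t + s') t L j σ
      - (∑ k : Fin (t + s'), ∑ l : Fin (t + s'),
          if (k : ℕ) < t ∧ t ≤ (l : ℕ) then L (j k) (j l) + L (j l) (j k) else 0)
    = -(2 * (∑ k : Fin (t + s'), ∑ l : Fin (t + s'),
          if k < l then L (j (σ k)) (j (σ l)) else 0))
      + 2 * (∑ k : Fin (t + s'), ∑ l : Fin (t + s'),
          if k < l ∧ (l : ℕ) < t then L (j k) (j l) else 0)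
      + 2 * (∑ k : Fin (t + s'), ∑ l : Fin (t + s'),
          if t ≤ (k : ℕ) ∧ k < l then L (j k) (j l) else 0)
      + 2 * (∑ k : Fin (t + s'), ∑ l : Fin (t + s'),
          if (k : ℕ) < t ∧ t ≤ (l : ℕ) ∧ σ⁻¹ l < σ⁻¹ k
          then L (j k) (j l) + L (j l) (j k) else 0) := by
  have total := sum_lt_swap_add_sum_lt_comp_perm σ (fun a b => L (j a) (j b))
  have blocks := sum_lt_eq_sum_blocks t (fun a b => L (j a) (j b))
  have blocks_swap := sum_lt_eq_sum_blocks t (fun a b => L (j b) (j a))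
  have cross : (∑ k : Fin (t + s'), ∑ l : Fin (t + s'),
        if (k : ℕ) < t ∧ t ≤ (l : ℕ) then L (j k) (j l) + L (j l) (j k) else 0)
      = (∑ k : Fin (t + s'), ∑ l : Fin (t + s'),
          if (k : ℕ) < t ∧ t ≤ (l : ℕ) then L (j k) (j l) else 0)
        + ∑ k : Fin (t + s'), ∑ l : Fin (t + s'),
          if (k : ℕ) < t ∧ t ≤ (l : ℕ) then L (j l) (j k) else 0 := by
    simp only [ite_add_zero, Finset.sum_add_distrib]
  rw [twoZetaSym_eq]
  linarith

/-- The exponent-equality lemma underlying the multiplicativity of the quantum shuffle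
character (multiplied through by 2): for any form `⟨·,·⟩ = L`, word `𝐣` of length
`n = t + s'`, and shuffle `σ ∈ Σ_{t,s'}`, with `𝐡 = 𝐣_σ`. -/
theorem exponent_equality {I : Type*} (L : I → I → ℤ) (t s' : ℕ)
    (j : Fin (t + s') → I) (σ : Equiv.Perm (Fin (t + s')))
    (hσ : isShuffle (t + s') t σ) :
    2 * (∑ k : Fin (t + s'), ∑ l : Fin (t + s'),
          if k < l then L (j (σ l)) (j (σ k)) else 0)
      - 2 * (∑ k : Fin (t + s'), ∑ l : Fin (t + s'),
          if k < l ∧ (l : ℕ) < t then L (j l) (j k) else 0)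
      - 2 * (∑ k : Fin (t + s'), ∑ l : Fin (t + s'),
          if t ≤ (k : ℕ) ∧ k < l then L (j l) (j k) else 0)
      + twoZetaSym (t + s') t L j σ
      - (∑ k : Fin (t + s'), ∑ l : Fin (t + s'),
          if (k : ℕ) < t ∧ t ≤ (l : ℕ) then L (j k) (j l) + L (j l) (j k) else 0)
    = -(2 * (∑ k : Fin (t + s'), ∑ l : Fin (t + s'),
          if k < l then L (j (σ k)) (j (σ l)) else 0))
      + 2 * (∑ k : Fin (t + s'), ∑ l : Fin (t + s'),
          if k < l ∧ (l : ℕ) < t then L (j k) (j l) else 0)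
      + 2 * (∑ k : Fin (t + s'), ∑ l : Fin (t + s'),
          if t ≤ (k : ℕ) ∧ k < l then L (j k) (j l) else 0)
      + 2 * (∑ k : Fin (t + s'), ∑ l : Fin (t + s'),
          if (k : ℕ) < t ∧ t ≤ (l : ℕ) ∧ σ⁻¹ l < σ⁻¹ k
          then L (j k) (j l) + L (j l) (j k) else 0) :=
  exponent_equality_general L t s' j σ
end
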